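/- arXiv:0806.1866 — 11 statements merged into one kernel-verified Lean document; each statement's English description precedes it below -/
import Mathlib

section
/- Let 𝒯 : D₂₁ × D₁₂ → H₁ × H₂ be the block operator 𝒯(f,g) = (T₁₁ f + T₁₂ g, T₂₁ f + T₂₂ g) and let S be the Schur-type operator with domain D(S) = {f ∈ D₂₁ : T₂₂⁻¹(T₂₁ f) ∈ D₁₂} and S f = T₁₁ f − T₁₂(T₂₂⁻¹(T₂₁ f)). Then 𝒯 is injective if and only if S is injective, and moreover ker 𝒯 = {(f, −T₂₂⁻¹(T₂₁ f)) : f ∈ ker S}; in particular ker 𝒯 is linearly isomorphic to ker S. -/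
/-!
The second row of `𝒯 (f, g) = 0` says exactly `g = -T₂₂⁻¹ T₂₁ f`, which forces `f ∈ D(S)`;
substituting this `g` into the first row leaves `S f = 0`. So `ker 𝒯` is the image of `ker S`
under the injective map `f ↦ (f, -T₂₂⁻¹ T₂₁ f)`.
-/

open LinearMap

namespace BlockOperator

variable {R M₁ M₂ : Type*} [Ring R] [AddCommGroup M₁] [Module R M₁] [AddCommGroup M₂] [Module R M₂]
  {D21 : Submodule R M₁} {D12 D22 : Submodule R M₂}

def blockOp (h : D12 ≤ D22) (T11 : D21 →ₗ[R] M₁) (T12 : D12 →ₗ[R] M₁) (T21 : D21 →ₗ[R] M₂)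
    (T22 : D22 →ₗ[R] M₂) : D21 × D12 →ₗ[R] M₁ × M₂ :=
  (T11.coprod T12).prod (T21.coprod (T22 ∘ₗ Submodule.inclusion h))

@[simp]
theorem blockOp_apply (h : D12 ≤ D22) (T11 : D21 →ₗ[R] M₁) (T12 : D12 →ₗ[R] M₁)
    (T21 : D21 →ₗ[R] M₂) (T22 : D22 →ₗ[R] M₂) (p : D21 × D12) :
    blockOp h T11 T12 T21 T22 p = (T11 p.1 + T12 p.2, T21 p.1 + T22 (Submodule.inclusion h p.2)) :=
  rfl

variable (D12) (T21 : D21 →ₗ[R] M₂) (T22 : D22 ≃ₗ[R] M₂)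

def schurDomain : Submodule R D21 :=
  D12.comap (D22.subtype ∘ₗ T22.symm.toLinearMap ∘ₗ T21)

/-- `T₂₂⁻¹ T₂₁` as a map from the Schur domain into `D12`. -/
def schurSnd : schurDomain D12 T21 T22 →ₗ[R] D12 :=
  (D22.subtype ∘ₗ T22.symm.toLinearMap ∘ₗ T21).restrict fun _ hf => hf

def schurComplement (T11 : D21 →ₗ[R] M₁) (T12 : D12 →ₗ[R] M₁) :
    schurDomain D12 T21 T22 →ₗ[R] M₁ :=
  T11 ∘ₗ (schurDomain D12 T21 T22).subtype - T12 ∘ₗ schurSnd D12 T21 T22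

def schurLift : schurDomain D12 T21 T22 →ₗ[R] D21 × D12 :=
  (schurDomain D12 T21 T22).subtype.prod (-schurSnd D12 T21 T22)

theorem schurLift_injective : Function.Injective (schurLift D12 T21 T22) :=
  fun _ _ h => Subtype.ext (congrArg Prod.fst h)

theorem schurLift_eq_iff (f : schurDomain D12 T21 T22) (p : D21 × D12) :
    schurLift D12 T21 T22 f = p ↔ p.1 = f ∧ (p.2 : M₂) = -(T22.symm (T21 f) : M₂) := by
  rw [eq_comm, Prod.ext_iff, Subtype.ext_iff (a1 := p.2)]
  rfl

theorem ker_blockOp (h : D12 ≤ D22) (T11 : D21 →ₗ[R] M₁) (T12 : D12 →ₗ[R] M₁) :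
    ker (blockOp h T11 T12 T21 T22) =
      (ker (schurComplement D12 T21 T22 T11 T12)).map (schurLift D12 T21 T22) := by
  ext ⟨f, g⟩
  simp only [mem_ker, Submodule.mem_map, schurLift_eq_iff, blockOp_apply, LinearEquiv.coe_coe,
    Prod.mk_eq_zero]
  constructor
  · rintro ⟨h1, h2⟩
    have hg : (T22.symm (T21 f) : M₂) = -g := by
      rw [add_eq_zero_iff_neg_eq, ← T22.symm_apply_eq, map_neg] at h2
      simpa [neg_eq_iff_eq_neg] using congrArg Subtype.val h2
    have hf : f ∈ schurDomain D12 T21 T22 := by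
      show (T22.symm (T21 f) : M₂) ∈ D12
      exact hg ▸ neg_mem g.2
    have hsnd : schurSnd D12 T21 T22 ⟨f, hf⟩ = -g := Subtype.ext hg
    refine ⟨⟨f, hf⟩, ?_, rfl, by rw [hg, neg_neg]⟩
    show T11 f - T12 (schurSnd D12 T21 T22 ⟨f, hf⟩) = 0
    rwa [hsnd, map_neg, sub_neg_eq_add]
  · rintro ⟨f, hS, rfl, hg⟩
    obtain rfl : g = -schurSnd D12 T21 T22 f := Subtype.ext hg
    have hincl : Submodule.inclusion h (-schurSnd D12 T21 T22 f) = -T22.symm (T21 f) := rfl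
    refine ⟨?_, by rw [hincl, map_neg, T22.apply_symm_apply, add_neg_cancel]⟩
    rwa [map_neg, ← sub_eq_add_neg]

end BlockOperator

open BlockOperator in
theorem stmt_0_general {H₁ H₂ : Type*}
    [NormedAddCommGroup H₁] [InnerProductSpace ℂ H₁]
    [NormedAddCommGroup H₂] [InnerProductSpace ℂ H₂]
    (D21 : Submodule ℂ H₁) (D12 D22 : Submodule ℂ H₂) (h1222 : D12 ≤ D22)
    (T11 : D21 →ₗ[ℂ] H₁) (T12 : D12 →ₗ[ℂ] H₁) (T21 : D21 →ₗ[ℂ] H₂)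
    (T22 : D22 →ₗ[ℂ] H₂) (T22inv : H₂ →ₗ[ℂ] D22)
    (hright : ∀ y : H₂, T22 (T22inv y) = y)
    (hleft : ∀ x : D22, T22inv (T22 x) = x)
    (𝒯 : (D21 × D12) →ₗ[ℂ] H₁ × H₂)
    (h𝒯 : ∀ p : D21 × D12,
      𝒯 p = (T11 p.1 + T12 p.2, T21 p.1 + T22 (Submodule.inclusion h1222 p.2)))
    (DS : Submodule ℂ D21)
    (hDS : ∀ f : D21, f ∈ DS ↔ (T22inv (T21 f) : H₂) ∈ D12)
    (S : DS →ₗ[ℂ] H₁)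
    (hS : ∀ f : DS, S f = T11 f.1 - T12 ⟨(T22inv (T21 f.1) : H₂), (hDS f.1).mp f.2⟩) :
    (Function.Injective 𝒯 ↔ Function.Injective S) ∧
    (∀ p : D21 × D12, 𝒯 p = 0 ↔
      ∃ f : DS, S f = 0 ∧ p.1 = f.1 ∧ (p.2 : H₂) = -(T22inv (T21 f.1) : H₂)) ∧
    Nonempty (LinearMap.ker 𝒯 ≃ₗ[ℂ] LinearMap.ker S) := by
  let e : D22 ≃ₗ[ℂ] H₂ := { T22 with invFun := T22inv, left_inv := hleft, right_inv := hright }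
  obtain rfl : 𝒯 = blockOp h1222 T11 T12 T21 T22 := LinearMap.ext h𝒯
  obtain rfl : DS = schurDomain D12 T21 e := Submodule.ext hDS
  obtain rfl : S = schurComplement D12 T21 e T11 T12 := LinearMap.ext hS
  have hker := ker_blockOp D12 T21 e h1222 T11 T12
  refine ⟨?_, fun p => ?_, ⟨(LinearEquiv.ofEq _ _ hker).trans
    (Submodule.equivMapOfInjective _ (schurLift_injective D12 T21 e) _).symm⟩⟩
  · rw [← ker_eq_bot, ← ker_eq_bot, hker, ← Submodule.map_bot (schurLift D12 T21 e),
      (Submodule.map_injective_of_injective (schurLift_injective D12 T21 e)).eq_iff]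
  · rw [← mem_ker, hker, Submodule.mem_map]
    simp only [schurLift_eq_iff, mem_ker]
    rfl

/-- For the block operator `𝒯(f,g) = (T₁₁f + T₁₂g, T₂₁f + T₂₂g)` and the
Schur-type operator `S f = T₁₁ f − T₁₂(T₂₂⁻¹(T₂₁ f))` with domain
`D(S) = {f ∈ D₂₁ : T₂₂⁻¹(T₂₁ f) ∈ D₁₂}`, the operator `𝒯` is injective iff `S` is injective,
`ker 𝒯 = {(f, −T₂₂⁻¹(T₂₁ f)) : f ∈ ker S}`, and `ker 𝒯` is linearly isomorphic to `ker S`. -/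
theorem stmt_0 {H₁ H₂ : Type*}
    [NormedAddCommGroup H₁] [InnerProductSpace ℂ H₁] [CompleteSpace H₁]
    [NormedAddCommGroup H₂] [InnerProductSpace ℂ H₂] [CompleteSpace H₂]
    (D21 : Submodule ℂ H₁) (D12 D22 : Submodule ℂ H₂) (h1222 : D12 ≤ D22)
    (T11 : D21 →ₗ[ℂ] H₁) (T12 : D12 →ₗ[ℂ] H₁) (T21 : D21 →ₗ[ℂ] H₂)
    (T22 : D22 →ₗ[ℂ] H₂) (T22inv : H₂ →ₗ[ℂ] D22)
    (hright : ∀ y : H₂, T22 (T22inv y) = y)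
    (hleft : ∀ x : D22, T22inv (T22 x) = x)
    (𝒯 : (D21 × D12) →ₗ[ℂ] H₁ × H₂)
    (h𝒯 : ∀ p : D21 × D12,
      𝒯 p = (T11 p.1 + T12 p.2, T21 p.1 + T22 (Submodule.inclusion h1222 p.2)))
    (DS : Submodule ℂ D21)
    (hDS : ∀ f : D21, f ∈ DS ↔ (T22inv (T21 f) : H₂) ∈ D12)
    (S : DS →ₗ[ℂ] H₁)
    (hS : ∀ f : DS, S f = T11 f.1 - T12 ⟨(T22inv (T21 f.1) : H₂), (hDS f.1).mp f.2⟩) :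
    (Function.Injective 𝒯 ↔ Function.Injective S) ∧
    (∀ p : D21 × D12, 𝒯 p = 0 ↔
      ∃ f : DS, S f = 0 ∧ p.1 = f.1 ∧ (p.2 : H₂) = -(T22inv (T21 f.1) : H₂)) ∧
    Nonempty (LinearMap.ker 𝒯 ≃ₗ[ℂ] LinearMap.ker S) :=
  stmt_0_general D21 D12 D22 h1222 T11 T12 T21 T22 T22inv hright hleft 𝒯 h𝒯 DS hDS S hS
end

section
/- Let 𝒯 : D₂₁ × D₁₂ → H₁ × H₂ be the block operator 𝒯(f,g) = (T₁₁ f + T₁₂ g, T₂₁ f + T₂₂ g) and let S be the Schur-type operator with domain D(S) = {f ∈ D₂₁ : T₂₂⁻¹(T₂₁ f) ∈ D₁₂} and S f = T₁₁ f − T₁₂(T₂₂⁻¹(T₂₁ f)). If in addition T₂₁ : D₂₁ → H₂ is surjective, then range(S) × {0} = range(𝒯) ∩ (H₁ × {0}), and 𝒯 is surjective if and only if S is surjective. -/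
/-!
If `𝒯 (f, g) = (y, 0)` then `T₂₁ f = -T₂₂ g`, so `T₂₂⁻¹ T₂₁ f = -g ∈ D₁₂`: hence `f ∈ D(S)` and
`S f = T₁₁ f + T₁₂ g = y`. Conversely `𝒯 (f, -T₂₂⁻¹ T₂₁ f) = (S f, 0)` for `f ∈ D(S)`. Thus
`range 𝒯` meets `H₁ × {0}` exactly in `range S × {0}`; when `T₂₁` is onto, the second component of
`𝒯` is onto as well, and a map whose range contains `H₁ × {0}` and whose second component is onto
is itself onto.
-/

theorem LinearMap.surjective_of_prod_zero_mem_range {R M A B : Type*} [Ring R]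
    [AddCommGroup M] [Module R M] [AddCommGroup A] [Module R A] [AddCommGroup B] [Module R B]
    (L : M →ₗ[R] A × B) (hA : ∀ a : A, (a, 0) ∈ Set.range L)
    (hB : Function.Surjective fun m => (L m).2) :
    Function.Surjective L := by
  rintro ⟨a, b⟩
  obtain ⟨m, hm : (L m).2 = b⟩ := hB b
  obtain ⟨m', hm'⟩ := hA (a - (L m).1)
  refine ⟨m' + m, ?_⟩
  rw [map_add, hm']
  exact Prod.ext (sub_add_cancel a _) ((zero_add _).trans hm)

section BlockOperator

variable {R H₁ H₂ X : Type*} [Ring R] [AddCommGroup H₁] [Module R H₁]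
  [AddCommGroup H₂] [Module R H₂] [AddCommGroup X] [Module R X]
  {D12 D22 : Submodule R H₂} {h1222 : D12 ≤ D22}
  {T11 : X →ₗ[R] H₁} {T12 : D12 →ₗ[R] H₁} {T21 : X →ₗ[R] H₂} {T22 : D22 →ₗ[R] H₂}
  {T22inv : H₂ →ₗ[R] D22} {𝒯 : (X × D12) →ₗ[R] H₁ × H₂} {DS : Submodule R X} {S : DS →ₗ[R] H₁}

theorem blockOp_apply_neg_schurCorrection
    (hright : ∀ y : H₂, T22 (T22inv y) = y)
    (h𝒯 : ∀ p : X × D12,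
      𝒯 p = (T11 p.1 + T12 p.2, T21 p.1 + T22 (Submodule.inclusion h1222 p.2)))
    (hDS : ∀ f : X, f ∈ DS ↔ (T22inv (T21 f) : H₂) ∈ D12)
    (hS : ∀ f : DS, S f = T11 f.1 - T12 ⟨(T22inv (T21 f.1) : H₂), (hDS f.1).mp f.2⟩)
    (f : DS) :
    𝒯 (f.1, -⟨(T22inv (T21 f.1) : H₂), (hDS f.1).mp f.2⟩) = (S f, 0) := by
  have hincl : Submodule.inclusion h1222 ⟨(T22inv (T21 f.1) : H₂), (hDS f.1).mp f.2⟩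
      = T22inv (T21 f.1) := rfl
  simp only [h𝒯, hS, map_neg, hincl, hright, sub_eq_add_neg, add_neg_cancel]

theorem mem_schurDomain_of_blockOp_eq
    (hleft : ∀ x : D22, T22inv (T22 x) = x)
    (h𝒯 : ∀ p : X × D12,
      𝒯 p = (T11 p.1 + T12 p.2, T21 p.1 + T22 (Submodule.inclusion h1222 p.2)))
    (hDS : ∀ f : X, f ∈ DS ↔ (T22inv (T21 f) : H₂) ∈ D12)
    (hS : ∀ f : DS, S f = T11 f.1 - T12 ⟨(T22inv (T21 f.1) : H₂), (hDS f.1).mp f.2⟩)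
    {p : X × D12} {y : H₁} (hp : 𝒯 p = (y, 0)) :
    ∃ hp₁ : p.1 ∈ DS, S ⟨p.1, hp₁⟩ = y := by
  rw [h𝒯, Prod.mk.injEq] at hp
  obtain ⟨hfst, hsnd⟩ := hp
  have hcorr : (T22inv (T21 p.1) : H₂) = -(p.2 : H₂) := by
    rw [eq_neg_of_add_eq_zero_left hsnd, map_neg, hleft]
    rfl
  have hp₁ : p.1 ∈ DS := (hDS p.1).mpr (hcorr ▸ neg_mem p.2.2)
  refine ⟨hp₁, ?_⟩
  have harg : (⟨(T22inv (T21 p.1) : H₂), (hDS p.1).mp hp₁⟩ : D12) = -p.2 := Subtype.ext hcorr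
  rw [hS, harg, map_neg, sub_neg_eq_add, hfst]

theorem prod_zero_mem_range_blockOp_iff
    (hright : ∀ y : H₂, T22 (T22inv y) = y)
    (hleft : ∀ x : D22, T22inv (T22 x) = x)
    (h𝒯 : ∀ p : X × D12,
      𝒯 p = (T11 p.1 + T12 p.2, T21 p.1 + T22 (Submodule.inclusion h1222 p.2)))
    (hDS : ∀ f : X, f ∈ DS ↔ (T22inv (T21 f) : H₂) ∈ D12)
    (hS : ∀ f : DS, S f = T11 f.1 - T12 ⟨(T22inv (T21 f.1) : H₂), (hDS f.1).mp f.2⟩)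
    (y : H₁) :
    (y, 0) ∈ Set.range 𝒯 ↔ y ∈ Set.range S := by
  constructor
  · rintro ⟨p, hp⟩
    obtain ⟨_, hSp⟩ := mem_schurDomain_of_blockOp_eq hleft h𝒯 hDS hS hp
    exact ⟨_, hSp⟩
  · rintro ⟨f, rfl⟩
    exact ⟨_, blockOp_apply_neg_schurCorrection hright h𝒯 hDS hS f⟩

end BlockOperator

theorem stmt_1_general {H₁ H₂ : Type*}
    [NormedAddCommGroup H₁] [InnerProductSpace ℂ H₁]
    [NormedAddCommGroup H₂] [InnerProductSpace ℂ H₂]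
    (D21 : Submodule ℂ H₁) (D12 D22 : Submodule ℂ H₂) (h1222 : D12 ≤ D22)
    (T11 : D21 →ₗ[ℂ] H₁) (T12 : D12 →ₗ[ℂ] H₁) (T21 : D21 →ₗ[ℂ] H₂)
    (T22 : D22 →ₗ[ℂ] H₂) (T22inv : H₂ →ₗ[ℂ] D22)
    (hright : ∀ y : H₂, T22 (T22inv y) = y)
    (hleft : ∀ x : D22, T22inv (T22 x) = x)
    (𝒯 : (D21 × D12) →ₗ[ℂ] H₁ × H₂)
    (h𝒯 : ∀ p : D21 × D12,
      𝒯 p = (T11 p.1 + T12 p.2, T21 p.1 + T22 (Submodule.inclusion h1222 p.2)))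
    (DS : Submodule ℂ D21)
    (hDS : ∀ f : D21, f ∈ DS ↔ (T22inv (T21 f) : H₂) ∈ D12)
    (S : DS →ₗ[ℂ] H₁)
    (hS : ∀ f : DS, S f = T11 f.1 - T12 ⟨(T22inv (T21 f.1) : H₂), (hDS f.1).mp f.2⟩)
    (hT21surj : Function.Surjective T21) :
    (Set.range S) ×ˢ ({0} : Set H₂) = Set.range 𝒯 ∩ (Set.univ ×ˢ ({0} : Set H₂)) ∧
    (Function.Surjective 𝒯 ↔ Function.Surjective S) := by
  have key := prod_zero_mem_range_blockOp_iff hright hleft h𝒯 hDS hS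
  refine ⟨?_, fun h𝒯surj y => (key y).mp (h𝒯surj (y, 0)), fun hSsurj => ?_⟩
  · ext ⟨y₁, y₂⟩
    simp only [Set.mem_prod, Set.mem_inter_iff, Set.mem_singleton_iff, Set.mem_univ, true_and]
    constructor
    · rintro ⟨hy₁, rfl⟩
      exact ⟨(key y₁).mpr hy₁, rfl⟩
    · rintro ⟨hy, rfl⟩
      exact ⟨(key y₁).mp hy, rfl⟩
  · refine 𝒯.surjective_of_prod_zero_mem_range (fun y => (key y).mpr (hSsurj y)) fun y₂ => ?_
    obtain ⟨f, hf⟩ := hT21surj y₂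
    exact ⟨(f, 0), by simp [h𝒯, hf]⟩

/-- For the block operator `𝒯(f,g) = (T₁₁f + T₁₂g, T₂₁f + T₂₂g)` and the
Schur-type operator `S f = T₁₁ f − T₁₂(T₂₂⁻¹(T₂₁ f))`, if `T₂₁` is surjective then
`range(S) × {0} = range(𝒯) ∩ (H₁ × {0})` and `𝒯` is surjective iff `S` is surjective. -/
theorem stmt_1 {H₁ H₂ : Type*}
    [NormedAddCommGroup H₁] [InnerProductSpace ℂ H₁] [CompleteSpace H₁]
    [NormedAddCommGroup H₂] [InnerProductSpace ℂ H₂] [CompleteSpace H₂]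
    (D21 : Submodule ℂ H₁) (D12 D22 : Submodule ℂ H₂) (h1222 : D12 ≤ D22)
    (T11 : D21 →ₗ[ℂ] H₁) (T12 : D12 →ₗ[ℂ] H₁) (T21 : D21 →ₗ[ℂ] H₂)
    (T22 : D22 →ₗ[ℂ] H₂) (T22inv : H₂ →ₗ[ℂ] D22)
    (hright : ∀ y : H₂, T22 (T22inv y) = y)
    (hleft : ∀ x : D22, T22inv (T22 x) = x)
    (𝒯 : (D21 × D12) →ₗ[ℂ] H₁ × H₂)
    (h𝒯 : ∀ p : D21 × D12,
      𝒯 p = (T11 p.1 + T12 p.2, T21 p.1 + T22 (Submodule.inclusion h1222 p.2)))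
    (DS : Submodule ℂ D21)
    (hDS : ∀ f : D21, f ∈ DS ↔ (T22inv (T21 f) : H₂) ∈ D12)
    (S : DS →ₗ[ℂ] H₁)
    (hS : ∀ f : DS, S f = T11 f.1 - T12 ⟨(T22inv (T21 f.1) : H₂), (hDS f.1).mp f.2⟩)
    (hT21surj : Function.Surjective T21) :
    (Set.range S) ×ˢ ({0} : Set H₂) = Set.range 𝒯 ∩ (Set.univ ×ˢ ({0} : Set H₂)) ∧
    (Function.Surjective 𝒯 ↔ Function.Surjective S) :=
  stmt_1_general D21 D12 D22 h1222 T11 T12 T21 T22 T22inv hright hleft 𝒯 h𝒯 DS hDS S hS hT21surj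
end

section
/- For every real λ > c₂ the bounded operator λ·I − T₂₂ is invertible in the algebra of bounded operators on H₂, and for every x ∈ D(T₁₂†) such that (λ·I − T₂₂)⁻¹(T₁₂† x) ∈ D(T₁₂), the inner product ⟪x, T₁₁ x − λ x − T₁₂((T₂₂ − λ·I)⁻¹(T₁₂† x))⟫ is real and satisfies ⟪x, T₁₁ x − λ x − T₁₂((T₂₂ − λ·I)⁻¹(T₁₂† x))⟫ ≥ (c₁ − λ)‖x‖². (This says the minimal Schur complement S₁(λ) = T₁₁ − λ − T₁₂(T₂₂ − λ)⁻¹T₁₂† is formally symmetric and bounded from below by c₁ − λ.) -/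
/-!
Write `A = λ - T₂₂`. Since `re ⟪y, A y⟫ ≥ (λ - c₂)‖y‖²`, `A` is coercive, hence invertible. For
`y = A⁻¹ T₁₂† x` the formal adjoint relation turns the coupling term into
`-⟪x, T₁₂ (T₂₂ - λ)⁻¹ T₁₂† x⟫ = ⟪T₁₂† x, y⟫ = ⟪y, A y⟫`, which is real (as `A` is self-adjoint) and
nonnegative, so `⟪x, S₁(λ) x⟫ = ⟪x, T₁₁ x⟫ - λ‖x‖² + ⟪y, A y⟫ ≥ (c₁ - λ)‖x‖²`.
-/

open RCLike ContinuousLinearMap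

section ShiftedOperator

variable {𝕜 E : Type*} [RCLike 𝕜] [NormedAddCommGroup E] [InnerProductSpace 𝕜 E]

theorem ContinuousLinearMap.sub_mul_norm_sq_le_re_inner_smul_one_sub_apply {T : E →L[𝕜] E}
    {c : ℝ} (hc : ∀ y, re (inner 𝕜 y (T y)) ≤ c * ‖y‖ ^ 2) (lam : ℝ) (y : E) :
    (lam - c) * ‖y‖ ^ 2 ≤ re (inner 𝕜 y (((lam : 𝕜) • (1 : E →L[𝕜] E) - T) y)) := by
  simp only [sub_apply, smul_apply, one_apply_eq_self, inner_sub_right, inner_smul_right,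
    inner_self_eq_norm_sq_to_K, map_sub, ← ofReal_pow, ← ofReal_mul, ofReal_re]
  linarith [hc y]

theorem ContinuousLinearMap.isUnit_smul_one_sub_of_re_inner_le [CompleteSpace E] {T : E →L[𝕜] E}
    {c : ℝ} (hc : ∀ y, re (inner 𝕜 y (T y)) ≤ c * ‖y‖ ^ 2) {lam : ℝ} (hlam : c < lam) :
    IsUnit ((lam : 𝕜) • (1 : E →L[𝕜] E) - T) := by
  refine isUnit_of_forall_le_norm_inner_map _ (c := ⟨lam - c, (sub_pos.2 hlam).le⟩)
    (sub_pos.2 hlam) fun y => ?_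
  calc ‖y‖ ^ 2 * (lam - c) ≤ re (inner 𝕜 y (((lam : 𝕜) • (1 : E →L[𝕜] E) - T) y)) := by
        rw [mul_comm]; exact sub_mul_norm_sq_le_re_inner_smul_one_sub_apply hc lam y
    _ ≤ _ := by rw [norm_inner_symm]; exact re_le_norm _

theorem IsSelfAdjoint.smul_one_sub [CompleteSpace E] {T : E →L[𝕜] E} (hT : IsSelfAdjoint T)
    (lam : ℝ) :
    IsSelfAdjoint ((lam : 𝕜) • (1 : E →L[𝕜] E) - T) :=
  (IsSelfAdjoint.smul (conj_ofReal lam) (IsSelfAdjoint.one _)).sub hT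

end ShiftedOperator

theorem LinearPMap.inner_apply_neg_eq_neg_inner_apply {𝕜 E F : Type*} [RCLike 𝕜]
    [NormedAddCommGroup E] [InnerProductSpace 𝕜 E] [CompleteSpace E]
    [NormedAddCommGroup F] [InnerProductSpace 𝕜 F]
    {T : E →ₗ.[𝕜] F} (hT : Dense (T.domain : Set E)) {A : E →L[𝕜] E} (hA : IsSelfAdjoint A)
    {x : T.adjoint.domain} {y : T.domain} (hAy : A y = T.adjoint x) :
    inner 𝕜 (x : F) (T (-y)) = -inner 𝕜 (y : E) (A y) := by
  rw [map_neg, inner_neg_right, ← T.adjoint_isFormalAdjoint hT x y, ← hAy]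
  exact congrArg Neg.neg (hA.isSymmetric y y)

theorem stmt_3_general {H₁ H₂ : Type*}
    [NormedAddCommGroup H₁] [InnerProductSpace ℂ H₁]
    [NormedAddCommGroup H₂] [InnerProductSpace ℂ H₂] [CompleteSpace H₂]
    (T12 : H₂ →ₗ.[ℂ] H₁) (hdense : Dense (T12.domain : Set H₂))
    (T22 : H₂ →L[ℂ] H₂) (hT22 : IsSelfAdjoint T22)
    (c₂ : ℝ) (hc2 : ∀ y : H₂, (inner ℂ y (T22 y) : ℂ).re ≤ c₂ * ‖y‖ ^ 2)
    (T11 : T12.adjoint.domain →ₗ[ℂ] H₁)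
    (hsymm : ∀ x x' : T12.adjoint.domain,
      (inner ℂ (x : H₁) (T11 x') : ℂ) = inner ℂ (T11 x) (x' : H₁))
    (c₁ : ℝ) (hc1 : ∀ x : T12.adjoint.domain,
      c₁ * ‖(x : H₁)‖ ^ 2 ≤ (inner ℂ (x : H₁) (T11 x) : ℂ).re)
    (lam : ℝ) (hlam : c₂ < lam) :
    IsUnit ((lam : ℂ) • (1 : H₂ →L[ℂ] H₂) - T22) ∧
    ∀ (x : T12.adjoint.domain)
      (hm : Ring.inverse ((lam : ℂ) • (1 : H₂ →L[ℂ] H₂) - T22) (T12.adjoint x) ∈ T12.domain)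
      (Sx : H₁),
      Sx = T11 x - (lam : ℂ) • (x : H₁) -
        T12 ⟨-(Ring.inverse ((lam : ℂ) • (1 : H₂ →L[ℂ] H₂) - T22) (T12.adjoint x)),
          T12.domain.neg_mem hm⟩ →
      (inner ℂ (x : H₁) Sx : ℂ).im = 0 ∧
      (c₁ - lam) * ‖(x : H₁)‖ ^ 2 ≤ (inner ℂ (x : H₁) Sx : ℂ).re := by
  set A := (lam : ℂ) • (1 : H₂ →L[ℂ] H₂) - T22
  have hunit : IsUnit A := isUnit_smul_one_sub_of_re_inner_le hc2 hlam
  have hA : IsSelfAdjoint A := hT22.smul_one_sub lam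
  refine ⟨hunit, fun x hm Sx hSx => ?_⟩
  set y : T12.domain := ⟨Ring.inverse A (T12.adjoint x), hm⟩
  have hAy : A y = T12.adjoint x := by
    simpa using congr($(Ring.mul_inverse_cancel A hunit) (T12.adjoint x))
  replace hSx : Sx = T11 x - (lam : ℂ) • (x : H₁) - T12 (-y) := hSx
  have hSchur : inner ℂ (x : H₁) Sx
      = inner ℂ (x : H₁) (T11 x) - (lam * ‖(x : H₁)‖ ^ 2 : ℝ) + inner ℂ (y : H₂) (A y) := by
    rw [hSx, inner_sub_right, inner_sub_right, inner_smul_right, inner_self_eq_norm_sq_to_K,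
      T12.inner_apply_neg_eq_neg_inner_apply hdense hA hAy, Complex.ofReal_mul,
      Complex.ofReal_pow, sub_neg_eq_add]
    rfl
  have hT11_real : (inner ℂ (x : H₁) (T11 x)).im = 0 :=
    Complex.conj_eq_iff_im.mp (by rw [inner_conj_symm, hsymm x x])
  have hA_real : (inner ℂ (y : H₂) (A y)).im = 0 :=
    hA.isSymmetric.im_inner_self_apply y
  have hA_pos : 0 ≤ (inner ℂ (y : H₂) (A y)).re := by
    have hcoercive := sub_mul_norm_sq_le_re_inner_smul_one_sub_apply (𝕜 := ℂ) hc2 lam (y : H₂)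
    exact (mul_nonneg (sub_nonneg.2 hlam.le) (sq_nonneg _)).trans hcoercive
  rw [hSchur]
  constructor
  · rw [Complex.add_im, Complex.sub_im, Complex.ofReal_im, hT11_real, hA_real, sub_zero, add_zero]
  · rw [Complex.add_re, Complex.sub_re, Complex.ofReal_re]
    linarith [hc1 x]

/-- For `λ > c₂`, `λ·I − T₂₂` is invertible among bounded operators on `H₂`,
and the minimal Schur complement `S₁(λ) = T₁₁ − λ − T₁₂(T₂₂ − λ)⁻¹T₁₂†` is formally symmetric
and bounded from below by `c₁ − λ`: for `x` in its domain, `⟪x, S₁(λ)x⟫` is real and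
`⟪x, S₁(λ)x⟫ ≥ (c₁ − λ)‖x‖²`. -/
theorem stmt_3 {H₁ H₂ : Type*}
    [NormedAddCommGroup H₁] [InnerProductSpace ℂ H₁] [CompleteSpace H₁]
    [NormedAddCommGroup H₂] [InnerProductSpace ℂ H₂] [CompleteSpace H₂]
    (T12 : H₂ →ₗ.[ℂ] H₁) (hdense : Dense (T12.domain : Set H₂)) (hclosed : T12.IsClosed)
    (T22 : H₂ →L[ℂ] H₂) (hT22 : IsSelfAdjoint T22)
    (c₂ : ℝ) (hc2 : ∀ y : H₂, (inner ℂ y (T22 y) : ℂ).re ≤ c₂ * ‖y‖ ^ 2)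
    (T11 : T12.adjoint.domain →ₗ[ℂ] H₁)
    (hsymm : ∀ x x' : T12.adjoint.domain,
      (inner ℂ (x : H₁) (T11 x') : ℂ) = inner ℂ (T11 x) (x' : H₁))
    (c₁ : ℝ) (hc1 : ∀ x : T12.adjoint.domain,
      c₁ * ‖(x : H₁)‖ ^ 2 ≤ (inner ℂ (x : H₁) (T11 x) : ℂ).re)
    (lam : ℝ) (hlam : c₂ < lam) :
    IsUnit ((lam : ℂ) • (1 : H₂ →L[ℂ] H₂) - T22) ∧
    ∀ (x : T12.adjoint.domain)
      (hm : Ring.inverse ((lam : ℂ) • (1 : H₂ →L[ℂ] H₂) - T22) (T12.adjoint x) ∈ T12.domain)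
      (Sx : H₁),
      Sx = T11 x - (lam : ℂ) • (x : H₁) -
        T12 ⟨-(Ring.inverse ((lam : ℂ) • (1 : H₂ →L[ℂ] H₂) - T22) (T12.adjoint x)),
          T12.domain.neg_mem hm⟩ →
      (inner ℂ (x : H₁) Sx : ℂ).im = 0 ∧
      (c₁ - lam) * ‖(x : H₁)‖ ^ 2 ≤ (inner ℂ (x : H₁) Sx : ℂ).re :=
  stmt_3_general T12 hdense T22 hT22 c₂ hc2 T11 hsymm c₁ hc1 lam hlam
end

section
/- For every real λ > c₂ the set D(S₁(λ)) := {x ∈ D(T₁₂†) : (λ·I − T₂₂)⁻¹(T₁₂† x) ∈ D(T₁₂)} is a dense linear subspace of H₁, where (λ·I − T₂₂)⁻¹ denotes the inverse of the (invertible) bounded operator λ·I − T₂₂. -/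
/-!
Put `A = λ - T₂₂`, so that `re ⟪y, A y⟫ ≥ (λ - c₂)‖y‖²`. The graph of `T₁₂` is a Hilbert space
because `T₁₂` is closed, and on it the form `⟪A z, w⟫ + ⟪T₁₂ z, T₁₂ w⟫` is coercive. By Lax–Milgram
every `u ∈ H₁` splits as `u = x + T₁₂ z` with `x ∈ D(T₁₂†)` and `T₁₂† x = A z`, so that
`A⁻¹ T₁₂† x = z ∈ D(T₁₂)` and `x ∈ D(S₁(λ))`. If `u ⊥ D(S₁(λ))`, then
`0 = re ⟪x, u⟫ = ‖x‖² + re ⟪A z, z⟫ ≥ ‖x‖² + (λ - c₂)‖z‖²`, hence `x = z = 0` and `u = 0`.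
-/

section

open RCLike ContinuousLinearMap
open scoped InnerProductSpace

variable {𝕜 : Type*} [RCLike 𝕜]

theorem ContinuousLinearMap.isUnit_of_le_re_inner_map {V : Type*} [NormedAddCommGroup V]
    [InnerProductSpace 𝕜 V] [CompleteSpace V] (K : V →L[𝕜] V) {c : ℝ} (hc : 0 < c)
    (hK : ∀ x, c * ‖x‖ ^ 2 ≤ re ⟪x, K x⟫_𝕜) : IsUnit K :=
  K.isUnit_of_forall_le_norm_inner_map (c := c.toNNReal) (by simpa) fun x => by
    rw [Real.coe_toNNReal _ hc.le, mul_comm, ← inner_conj_symm, RCLike.norm_conj]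
    exact (hK x).trans (re_le_norm _)

theorem Submodule.exists_inner_map_eq_of_le_re_inner_map {V : Type*} [NormedAddCommGroup V]
    [InnerProductSpace 𝕜 V] (G : Submodule 𝕜 V) [CompleteSpace G] (J : V →L[𝕜] V) {c : ℝ}
    (hc : 0 < c) (hJ : ∀ g ∈ G, c * ‖g‖ ^ 2 ≤ re ⟪g, J g⟫_𝕜) (v : V) :
    ∃ g ∈ G, ∀ g' ∈ G, ⟪J g, g'⟫_𝕜 = ⟪v, g'⟫_𝕜 := by
  let K : G →L[𝕜] G := G.orthogonalProjectionOnto ∘L J ∘L G.subtypeL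
  have hK : ∀ g : G, c * ‖g‖ ^ 2 ≤ re ⟪g, K g⟫_𝕜 := fun g => by
    simpa [K] using hJ g g.2
  obtain ⟨g, hg⟩ := (isUnit_iff_bijective.1 (K.isUnit_of_le_re_inner_map hc hK)).2
    (G.orthogonalProjectionOnto v)
  refine ⟨g, g.2, fun g' hg' => ?_⟩
  simpa [K] using congrArg (fun w : G => ⟪w, ⟨g', hg'⟩⟫_𝕜) hg

variable {E F : Type*} [NormedAddCommGroup E] [InnerProductSpace 𝕜 E] [CompleteSpace E]
  [NormedAddCommGroup F] [InnerProductSpace 𝕜 F] [CompleteSpace F]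

theorem LinearPMap.IsClosed.exists_inner_map_add_inner_eq {T : E →ₗ.[𝕜] F} (hT : T.IsClosed)
    (A : E →L[𝕜] E) {c : ℝ} (hc : 0 < c) (hA : ∀ y, c * ‖y‖ ^ 2 ≤ re ⟪y, A y⟫_𝕜) (u : F) :
    ∃ z : T.domain, ∀ w : T.domain, ⟪A z, w⟫_𝕜 + ⟪T z, T w⟫_𝕜 = ⟪u, T w⟫_𝕜 := by
  let e := WithLp.prodContinuousLinearEquiv 2 𝕜 E F
  let G : Submodule 𝕜 (WithLp 2 (E × F)) := T.graph.comap (e : WithLp 2 (E × F) →ₗ[𝕜] E × F)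
  have : CompleteSpace G := (hT.preimage e.continuous).completeSpace_coe
  let J := (e.symm : E × F →L[𝕜] WithLp 2 (E × F)) ∘L A.prodMap (.id 𝕜 F) ∘L
    (e : WithLp 2 (E × F) →L[𝕜] E × F)
  have hJ : ∀ v ∈ G, min c 1 * ‖v‖ ^ 2 ≤ re ⟪v, J v⟫_𝕜 := fun v _ => by
    have hJv : ⟪v, J v⟫_𝕜 = ⟪v.fst, A v.fst⟫_𝕜 + ⟪v.snd, v.snd⟫_𝕜 := rfl
    rw [hJv, _root_.map_add, inner_self_eq_norm_sq, WithLp.prod_norm_sq_eq_of_L2]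
    linarith [hA v.fst, mul_le_mul_of_nonneg_right (min_le_left c 1) (sq_nonneg ‖v.fst‖),
      mul_le_mul_of_nonneg_right (min_le_right c 1) (sq_nonneg ‖v.snd‖)]
  obtain ⟨g, hgG, hg⟩ := G.exists_inner_map_eq_of_le_re_inner_map J (lt_min hc one_pos) hJ
    (WithLp.toLp 2 (0, u))
  obtain ⟨z, hz1, hz2⟩ : ∃ z : T.domain, (z : E) = g.fst ∧ T z = g.snd := T.mem_graph_iff.1 hgG
  refine ⟨z, fun w => ?_⟩
  have hw : ⟪A g.fst, w⟫_𝕜 + ⟪g.snd, T w⟫_𝕜 = ⟪(0 : E), w⟫_𝕜 + ⟪u, T w⟫_𝕜 :=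
    hg (WithLp.toLp 2 (w, T w)) (T.mem_graph w)
  rwa [inner_zero_left, zero_add, ← hz1, ← hz2] at hw

theorem LinearPMap.exists_adjoint_eq_and_add_eq {T : E →ₗ.[𝕜] F}
    (hdense : Dense (T.domain : Set E)) (hT : T.IsClosed) (A : E →L[𝕜] E) {c : ℝ} (hc : 0 < c)
    (hA : ∀ y, c * ‖y‖ ^ 2 ≤ re ⟪y, A y⟫_𝕜) (u : F) :
    ∃ (x : T.adjoint.domain) (z : T.domain), T.adjoint x = A z ∧ (x : F) + T z = u := by
  obtain ⟨z, hz⟩ := hT.exists_inner_map_add_inner_eq A hc hA u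
  have hadj : ∀ w : T.domain, ⟪A z, w⟫_𝕜 = ⟪u - T z, T w⟫_𝕜 := fun w => by
    rw [inner_sub_left, ← hz w, add_sub_cancel_right]
  exact ⟨⟨u - T z, mem_adjoint_domain_of_exists _ ⟨_, hadj⟩⟩, z, adjoint_apply_eq hdense _ hadj,
    sub_add_cancel u _⟩

def LinearPMap.preimage {R E F : Type*} [Ring R] [AddCommGroup E] [Module R E] [AddCommGroup F]
    [Module R F] (f : E →ₗ.[R] F) (p : Submodule R F) : Submodule R E :=
  (p.comap f.toFun).map f.domain.subtype

theorem LinearPMap.mem_preimage {R E F : Type*} [Ring R] [AddCommGroup E] [Module R E]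
    [AddCommGroup F] [Module R F] (f : E →ₗ.[R] F) (p : Submodule R F) (x : E) :
    x ∈ f.preimage p ↔ ∃ hx : x ∈ f.domain, f ⟨x, hx⟩ ∈ p := by
  simp [preimage]

theorem LinearPMap.dense_adjoint_preimage_comap_domain {T : E →ₗ.[𝕜] F}
    (hdense : Dense (T.domain : Set E)) (hT : T.IsClosed) (A : E →L[𝕜] E) {c : ℝ} (hc : 0 < c)
    (hA : ∀ y, c * ‖y‖ ^ 2 ≤ re ⟪y, A y⟫_𝕜) :
    Dense (T.adjoint.preimage (T.domain.comap (Ring.inverse A).toLinearMap) : Set F) := by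
  rw [Submodule.dense_iff_topologicalClosure_eq_top, Submodule.topologicalClosure_eq_top_iff,
    Submodule.eq_bot_iff]
  intro u hu
  obtain ⟨x, z, hTx, rfl⟩ := T.exists_adjoint_eq_and_add_eq hdense hT A hc hA u
  have hxp : (x : F) ∈ T.adjoint.preimage (T.domain.comap (Ring.inverse A).toLinearMap) := by
    refine (mem_preimage _ _ _).2 ⟨x.2, ?_⟩
    rw [Submodule.mem_comap, coe_coe, hTx, ← mul_apply_eq_comp,
      Ring.inverse_mul_cancel _ (A.isUnit_of_le_re_inner_map hc hA)]
    exact z.2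
  have hinner : ⟪(x : F), x + T z⟫_𝕜 = ⟪(x : F), x⟫_𝕜 + ⟪A z, z⟫_𝕜 := by
    rw [← hTx, adjoint_isFormalAdjoint hdense, inner_add_right]
  have hre : ‖(x : F)‖ ^ 2 + re ⟪(z : E), A z⟫_𝕜 = 0 := by
    rw [← inner_self_eq_norm_sq (𝕜 := 𝕜), inner_re_symm (z : E), ← _root_.map_add re, ← hinner,
      (Submodule.mem_orthogonal _ _).1 hu x hxp, _root_.map_zero]
  have hz : ‖(z : E)‖ ^ 2 ≤ 0 :=
    nonpos_of_mul_nonpos_right (by linarith [hA z, sq_nonneg ‖(x : F)‖]) hc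
  have hx : ‖(x : F)‖ ^ 2 ≤ 0 := by linarith [hA z, mul_nonneg hc.le (sq_nonneg ‖(z : E)‖)]
  have hz0 : z = 0 := Subtype.ext (norm_eq_zero.1 ((sq_nonpos_iff _).1 hz))
  rw [norm_eq_zero.1 ((sq_nonpos_iff _).1 hx), hz0, map_zero, add_zero]

end

theorem stmt_4_general {H₁ H₂ : Type*}
    [NormedAddCommGroup H₁] [InnerProductSpace ℂ H₁] [CompleteSpace H₁]
    [NormedAddCommGroup H₂] [InnerProductSpace ℂ H₂] [CompleteSpace H₂]
    (T12 : H₂ →ₗ.[ℂ] H₁) (hdense : Dense (T12.domain : Set H₂)) (hclosed : T12.IsClosed)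
    (T22 : H₂ →L[ℂ] H₂)
    (c₂ : ℝ) (hc2 : ∀ y : H₂, (inner ℂ y (T22 y) : ℂ).re ≤ c₂ * ‖y‖ ^ 2)
    (lam : ℝ) (hlam : c₂ < lam) :
    ∃ p : Submodule ℂ H₁,
      (p : Set H₁) = {x : H₁ | ∃ hx : x ∈ T12.adjoint.domain,
        Ring.inverse ((lam : ℂ) • (1 : H₂ →L[ℂ] H₂) - T22) (T12.adjoint ⟨x, hx⟩) ∈ T12.domain} ∧
      Dense (p : Set H₁) := by
  set A : H₂ →L[ℂ] H₂ := (lam : ℂ) • 1 - T22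
  have hA : ∀ y, (lam - c₂) * ‖y‖ ^ 2 ≤ (inner ℂ y (A y) : ℂ).re := fun y => by
    have hre : (inner ℂ y (A y) : ℂ).re = lam * ‖y‖ ^ 2 - (inner ℂ y (T22 y) : ℂ).re := by
      simp [A, ← Complex.ofReal_pow]
    linarith [hc2 y]
  refine ⟨T12.adjoint.preimage (T12.domain.comap (Ring.inverse A).toLinearMap), ?_,
    T12.dense_adjoint_preimage_comap_domain hdense hclosed A (sub_pos.2 hlam) hA⟩
  ext x
  simp [LinearPMap.mem_preimage]

/-- For every `λ > c₂`, the domain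
`D(S₁(λ)) = {x ∈ D(T₁₂†) : (λ·I − T₂₂)⁻¹(T₁₂†x) ∈ D(T₁₂)}` is a dense linear subspace of `H₁`. -/
theorem stmt_4 {H₁ H₂ : Type*}
    [NormedAddCommGroup H₁] [InnerProductSpace ℂ H₁] [CompleteSpace H₁]
    [NormedAddCommGroup H₂] [InnerProductSpace ℂ H₂] [CompleteSpace H₂]
    (T12 : H₂ →ₗ.[ℂ] H₁) (hdense : Dense (T12.domain : Set H₂)) (hclosed : T12.IsClosed)
    (T22 : H₂ →L[ℂ] H₂) (hT22 : IsSelfAdjoint T22)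
    (c₂ : ℝ) (hc2 : ∀ y : H₂, (inner ℂ y (T22 y) : ℂ).re ≤ c₂ * ‖y‖ ^ 2)
    (lam : ℝ) (hlam : c₂ < lam) :
    ∃ p : Submodule ℂ H₁,
      (p : Set H₁) = {x : H₁ | ∃ hx : x ∈ T12.adjoint.domain,
        Ring.inverse ((lam : ℂ) • (1 : H₂ →L[ℂ] H₂) - T22) (T12.adjoint ⟨x, hx⟩) ∈ T12.domain} ∧
      Dense (p : Set H₁) :=
  stmt_4_general T12 hdense hclosed T22 c₂ hc2 lam hlam
end

section
/- Fix x ∈ D(T₁₂†) with x ≠ 0 and define σ : (c₂, ∞) → ℝ by σ(λ) = re⟪x, T₁₁ x⟫ − λ‖x‖² − re⟪T₁₂† x, (T₂₂ − λ·I)⁻¹(T₁₂† x)⟫. Then: (i) at every λ > c₂ the function σ is differentiable with derivative σ'(λ) = −‖x‖² − ‖(T₂₂ − λ·I)⁻¹(T₁₂† x)‖²; (ii) σ is strictly decreasing on (c₂, ∞); (iii) σ(λ) → −∞ as λ → ∞. -/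
/-!
Write `R(λ) = (λ - T₂₂)⁻¹` for the resolvent and `u = T₁₂† x`, so that
`σ(λ) = re⟪x, T₁₁ x⟫ - λ‖x‖² + re⟪u, R(λ) u⟫`. The bound on `re⟪y, T₂₂ y⟫` says `T₂₂ ≤ c₂` in the
Loewner order, so by the continuous functional calculus the spectrum of `T₂₂` lies in `(-∞, c₂]`.
On `(c₂, ∞)` the resolvent is differentiable with `R' = -R²`, and as `R(λ)` is self-adjoint,
`re⟪u, R(λ)² u⟫ = ‖R(λ) u‖²`. Hence `σ' ≤ -‖x‖² < 0`, which gives both strict monotonicity and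
`σ → -∞`.
-/

open Filter Set

theorem strictAntiOn_Ioi_of_hasDerivAt_neg {f f' : ℝ → ℝ} {c : ℝ}
    (hf : ∀ t, c < t → HasDerivAt f (f' t) t) (hf' : ∀ t, c < t → f' t < 0) :
    StrictAntiOn f (Ioi c) := by
  refine strictAntiOn_of_hasDerivWithinAt_neg (convex_Ioi c) (f' := f')
    (fun t ht => (hf t ht).continuousAt.continuousWithinAt) ?_ ?_ <;> rw [interior_Ioi]
  · exact fun t ht => (hf t ht).hasDerivWithinAt
  · exact hf'

theorem tendsto_atBot_of_hasDerivAt_le {f f' : ℝ → ℝ} {c a : ℝ} (ha : 0 < a)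
    (hf : ∀ t, c < t → HasDerivAt f (f' t) t) (hf' : ∀ t, c < t → f' t ≤ -a) :
    Tendsto f atTop atBot := by
  have hg : ∀ t, c < t → HasDerivAt (fun s => f s + a * s) (f' t + a) t := fun t ht =>
    ((hf t ht).add ((hasDerivAt_id' t).const_mul a)).congr_deriv (by ring)
  have hanti : AntitoneOn (fun s => f s + a * s) (Ioi c) := by
    refine antitoneOn_of_hasDerivWithinAt_nonpos (convex_Ioi c) (f' := fun t => f' t + a)
      (fun t ht => (hg t ht).continuousAt.continuousWithinAt) ?_ ?_ <;> rw [interior_Ioi]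
    · exact fun t ht => (hg t ht).hasDerivWithinAt
    · exact fun t ht => by linarith [hf' t ht]
  refine tendsto_atBot_mono' atTop (f₁ := fun t => f (c + 1) + a * (c + 1) + -(a * t)) ?_ ?_
  · filter_upwards [eventually_ge_atTop (c + 1)] with t ht
    have hle := hanti (show c < c + 1 by simp) (show c < t by linarith) ht
    simp only at hle
    linarith
  · exact tendsto_atBot_add_const_left _ _
      (tendsto_neg_atTop_atBot.comp (tendsto_id.const_mul_atTop ha))

theorem Ring.inverse_neg {R : Type*} [Ring R] (a : R) :
    Ring.inverse (-a) = -Ring.inverse a := by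
  by_cases ha : IsUnit a
  · obtain ⟨u, rfl⟩ := ha
    rw [← Units.val_neg, Ring.inverse_unit, Ring.inverse_unit, inv_neg, Units.val_neg]
  · rw [Ring.inverse_non_unit _ ha, Ring.inverse_non_unit _ (by rwa [IsUnit.neg_iff]), neg_zero]

theorem IsSelfAdjoint.resolvent {R A : Type*} [CommSemiring R] [StarRing R] [TrivialStar R]
    [Ring A] [StarRing A] [Algebra R A] [StarModule R A] {a : A} (ha : IsSelfAdjoint a) (r : R) :
    IsSelfAdjoint (resolvent a r) := by
  rw [IsSelfAdjoint, _root_.resolvent, ← Ring.inverse_star,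
    ((IsSelfAdjoint.algebraMap A (.all r)).sub ha).star_eq]

namespace ContinuousLinearMap

variable {H : Type*} [NormedAddCommGroup H] [InnerProductSpace ℂ H]

theorem inverse_sub_smul_one_eq_neg_resolvent (T : H →L[ℂ] H) (t : ℝ) :
    Ring.inverse (T - (t : ℂ) • 1) = -resolvent T t := by
  rw [resolvent, ← Ring.inverse_neg, neg_sub, Algebra.algebraMap_eq_smul_one, Complex.coe_smul]

theorem hasDerivAt_re_inner_apply {R : ℝ → H →L[ℂ] H} {R' : H →L[ℂ] H} {t : ℝ}
    (hR : HasDerivAt R R' t) (u : H) :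
    HasDerivAt (fun s => (inner ℂ u (R s u)).re) (inner ℂ u (R' u)).re t :=
  (Complex.reCLM.comp (((innerSL ℂ u).comp (apply ℂ H u)).restrictScalars ℝ)).hasFDerivAt
    |>.comp_hasDerivAt t hR

variable [CompleteSpace H]

theorem re_inner_apply_sq {R : H →L[ℂ] H} (hR : IsSelfAdjoint R) (u : H) :
    (inner ℂ u ((R ^ 2) u)).re = ‖R u‖ ^ 2 := by
  have hsymm : inner ℂ (R u) (R u) = inner ℂ u (R (R u)) := hR.isSymmetric u (R u)
  rw [sq, mul_apply_eq_comp, ← hsymm, inner_self_eq_norm_sq_to_K]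
  norm_cast

theorem mem_resolventSet_of_re_inner_le {T : H →L[ℂ] H} (hT : IsSelfAdjoint T) {c : ℝ}
    (hc : ∀ y, (inner ℂ y (T y)).re ≤ c * ‖y‖ ^ 2) {t : ℝ} (ht : c < t) :
    t ∈ resolventSet ℝ T := by
  have hle : T ≤ algebraMap ℝ _ c := by
    refine (le_def _ _).2 ⟨((IsSelfAdjoint.algebraMap _ (.all c)).sub hT).isSymmetric, fun y => ?_⟩
    have hsymm : inner ℂ (T y) y = inner ℂ y (T y) := hT.isSymmetric y y
    have hc' : (inner ℂ (algebraMap ℝ (H →L[ℂ] H) c y) y).re = c * ‖y‖ ^ 2 := by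
      simp [Algebra.algebraMap_eq_smul_one, ← Complex.ofReal_pow]
    rw [reApplyInnerSelf_apply, sub_apply, inner_sub_left, hsymm, map_sub, RCLike.re_to_complex,
      RCLike.re_to_complex, hc']
    linarith [hc y]
  have hspec := (le_algebraMap_iff_spectrum_le hT).1 hle
  by_contra h
  exact (hspec t h).not_gt ht

theorem hasDerivAt_re_inner_resolvent {T : H →L[ℂ] H} (hT : IsSelfAdjoint T) {t : ℝ}
    (ht : t ∈ resolventSet ℝ T) (u : H) :
    HasDerivAt (fun s => (inner ℂ u (resolvent T s u)).re) (-‖resolvent T t u‖ ^ 2) t := by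
  have := hasDerivAt_re_inner_apply (spectrum.hasDerivAt_resolvent_const_left ht) u
  rwa [neg_apply, inner_neg_right, Complex.neg_re, re_inner_apply_sq (hT.resolvent t)] at this

end ContinuousLinearMap

theorem stmt_7_general {H₁ H₂ : Type*}
    [NormedAddCommGroup H₁] [InnerProductSpace ℂ H₁]
    [NormedAddCommGroup H₂] [InnerProductSpace ℂ H₂] [CompleteSpace H₂]
    (T12 : H₂ →ₗ.[ℂ] H₁)
    (T22 : H₂ →L[ℂ] H₂) (hT22 : IsSelfAdjoint T22)
    (c₂ : ℝ) (hc2 : ∀ y : H₂, (inner ℂ y (T22 y) : ℂ).re ≤ c₂ * ‖y‖ ^ 2)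
    (T11 : T12.adjoint.domain →ₗ[ℂ] H₁)
    (x : T12.adjoint.domain) (hxne : (x : H₁) ≠ 0)
    (σ : ℝ → ℝ)
    (hσ : ∀ lam : ℝ, c₂ < lam →
      σ lam = (inner ℂ (x : H₁) (T11 x) : ℂ).re - lam * ‖(x : H₁)‖ ^ 2 -
        (inner ℂ (T12.adjoint x)
          (Ring.inverse (T22 - (lam : ℂ) • (1 : H₂ →L[ℂ] H₂)) (T12.adjoint x)) : ℂ).re) :
    (∀ lam : ℝ, c₂ < lam → HasDerivAt σ
      (-‖(x : H₁)‖ ^ 2 -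
        ‖Ring.inverse (T22 - (lam : ℂ) • (1 : H₂ →L[ℂ] H₂)) (T12.adjoint x)‖ ^ 2) lam) ∧
    StrictAntiOn σ (Set.Ioi c₂) ∧
    Filter.Tendsto σ Filter.atTop Filter.atBot := by
  simp only [ContinuousLinearMap.inverse_sub_smul_one_eq_neg_resolvent, neg_apply, norm_neg,
    inner_neg_right, Complex.neg_re, sub_neg_eq_add] at hσ ⊢
  set u := T12.adjoint x
  have hderiv : ∀ t, c₂ < t → HasDerivAt σ (-‖(x : H₁)‖ ^ 2 - ‖resolvent T22 t u‖ ^ 2) t := by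
    intro t ht
    have hres := ContinuousLinearMap.mem_resolventSet_of_re_inner_le hT22 hc2 ht
    have hlin := ((hasDerivAt_id t).mul_const (‖(x : H₁)‖ ^ 2)).const_sub
      (inner ℂ (x : H₁) (T11 x)).re
    refine (hlin.add (ContinuousLinearMap.hasDerivAt_re_inner_resolvent hT22 hres u)).congr_deriv
      (by ring) |>.congr_of_eventuallyEq ?_
    filter_upwards [Ioi_mem_nhds ht] with s hs using hσ s hs
  have hx : 0 < ‖(x : H₁)‖ ^ 2 := pow_pos (norm_pos_iff.2 hxne) 2
  have hderiv_le : ∀ t, c₂ < t → -‖(x : H₁)‖ ^ 2 - ‖resolvent T22 t u‖ ^ 2 ≤ -‖(x : H₁)‖ ^ 2 :=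
    fun t _ => sub_le_self _ (sq_nonneg _)
  exact ⟨hderiv,
    strictAntiOn_Ioi_of_hasDerivAt_neg hderiv fun t ht => (hderiv_le t ht).trans_lt (by linarith),
    tendsto_atBot_of_hasDerivAt_le hx hderiv hderiv_le⟩

/-- For fixed nonzero `x ∈ D(T₁₂†)`, the function
`σ(λ) = re⟪x, T₁₁x⟫ − λ‖x‖² − re⟪T₁₂†x, (T₂₂ − λ)⁻¹(T₁₂†x)⟫` on `(c₂, ∞)` is differentiable
with derivative `σ'(λ) = −‖x‖² − ‖(T₂₂ − λ)⁻¹(T₁₂†x)‖²`, strictly decreasing, and tends to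
`−∞` as `λ → ∞`. -/
theorem stmt_7 {H₁ H₂ : Type*}
    [NormedAddCommGroup H₁] [InnerProductSpace ℂ H₁] [CompleteSpace H₁]
    [NormedAddCommGroup H₂] [InnerProductSpace ℂ H₂] [CompleteSpace H₂]
    (T12 : H₂ →ₗ.[ℂ] H₁) (hdense : Dense (T12.domain : Set H₂)) (hclosed : T12.IsClosed)
    (T22 : H₂ →L[ℂ] H₂) (hT22 : IsSelfAdjoint T22)
    (c₂ : ℝ) (hc2 : ∀ y : H₂, (inner ℂ y (T22 y) : ℂ).re ≤ c₂ * ‖y‖ ^ 2)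
    (T11 : T12.adjoint.domain →ₗ[ℂ] H₁)
    (hsymm : ∀ x x' : T12.adjoint.domain,
      (inner ℂ (x : H₁) (T11 x') : ℂ) = inner ℂ (T11 x) (x' : H₁))
    (x : T12.adjoint.domain) (hxne : (x : H₁) ≠ 0)
    (σ : ℝ → ℝ)
    (hσ : ∀ lam : ℝ, c₂ < lam →
      σ lam = (inner ℂ (x : H₁) (T11 x) : ℂ).re - lam * ‖(x : H₁)‖ ^ 2 -
        (inner ℂ (T12.adjoint x)
          (Ring.inverse (T22 - (lam : ℂ) • (1 : H₂ →L[ℂ] H₂)) (T12.adjoint x)) : ℂ).re) :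
    (∀ lam : ℝ, c₂ < lam → HasDerivAt σ
      (-‖(x : H₁)‖ ^ 2 -
        ‖Ring.inverse (T22 - (lam : ℂ) • (1 : H₂ →L[ℂ] H₂)) (T12.adjoint x)‖ ^ 2) lam) ∧
    StrictAntiOn σ (Set.Ioi c₂) ∧
    Filter.Tendsto σ Filter.atTop Filter.atBot :=
  stmt_7_general T12 T22 hT22 c₂ hc2 T11 x hxne σ hσ
end

section
/- Let x ∈ D(T₁₂†), x ≠ 0, and suppose λ₀ > c₂ satisfies re⟪x, T₁₁ x⟫ − λ₀‖x‖² − re⟪T₁₂† x, (T₂₂ − λ₀·I)⁻¹(T₁₂† x)⟫ = 0. Assume moreover that y₀ := (T₂₂ − λ₀·I)⁻¹(T₁₂† x) belongs to D(T₁₂) and y₀ ≠ 0. Then λ₊(x, y₀) = λ₀; i.e. the supremum sup{ λ₊(x,y) : y ∈ D(T₁₂), y ≠ 0 } is attained at y₀ and equals λ₀. -/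
/-!
Put `P := λ₀ - T₂₂`, which is positive and invertible since `λ₀ > c₂`, and `u := T₁₂† x`, so that
`y₀ = -P⁻¹ u` and `⟪x, T₁₂ y⟫ = ⟪u, y⟫ = -⟪y₀, P y⟫`. The equation for `λ₀` says
`⟪y₀, P y₀⟫ = λ₀‖x‖² - re⟪x, T₁₁ x⟫`, so the Cauchy–Schwarz inequality for the form `⟪·, P ·⟫` gives
`|⟪x, T₁₂ y⟫|² ≤ (λ₀‖x‖² - re⟪x, T₁₁ x⟫)(λ₀‖y‖² - re⟪y, T₂₂ y⟫)`, with equality at `y = y₀`.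
This inequality says exactly that `λ₀` dominates the larger eigenvalue `λ₊(x, y)` of the
`2 × 2` matrix `𝒯_{x,y}`, with equality when it is an equality.
-/

open RCLike

theorem add_add_sqrt_div_two_le {A B c lam : ℝ} (hA : A ≤ lam) (hB : B ≤ lam)
    (hc : c ≤ (lam - A) * (lam - B)) :
    (A + B + Real.sqrt ((A - B) ^ 2 + 4 * c)) / 2 ≤ lam := by
  have hsq : (A - B) ^ 2 + 4 * c ≤ (2 * lam - A - B) ^ 2 := by nlinarith
  have hsqrt := Real.sqrt_le_sqrt hsq
  rw [Real.sqrt_sq (by linarith)] at hsqrt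
  linarith

theorem add_add_sqrt_div_two_eq {A B c lam : ℝ} (hA : A ≤ lam) (hB : B ≤ lam)
    (hc : c = (lam - A) * (lam - B)) :
    (A + B + Real.sqrt ((A - B) ^ 2 + 4 * c)) / 2 = lam := by
  have hsq : (A - B) ^ 2 + 4 * c = (2 * lam - A - B) ^ 2 := by rw [hc]; ring
  rw [hsq, Real.sqrt_sq (by linarith)]
  ring

namespace ContinuousLinearMap

variable {𝕜 E : Type*} [RCLike 𝕜] [NormedAddCommGroup E] [InnerProductSpace 𝕜 E]

theorem IsPositive.norm_inner_map_sq_le {T : E →L[𝕜] E} (hT : T.IsPositive) (a b : E) :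
    ‖inner 𝕜 a (T b)‖ ^ 2 ≤ re (inner 𝕜 a (T a)) * re (inner 𝕜 b (T b)) := by
  let form : PreInnerProductSpace.Core 𝕜 E :=
    { inner a b := inner 𝕜 a (T b)
      conj_inner_symm a b := by rw [inner_conj_symm, hT.inner_left_eq_inner_right]
      re_inner_nonneg a := hT.re_inner_nonneg_right a
      add_left a b c := inner_add_left _ _ _
      smul_left a b r := inner_smul_left _ _ _ }
  have h := @InnerProductSpace.Core.inner_mul_inner_self_le 𝕜 E _ _ _ form a b
  change ‖inner 𝕜 a (T b)‖ * ‖inner 𝕜 b (T a)‖ ≤ re (inner 𝕜 a (T a)) * re (inner 𝕜 b (T b)) at h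
  rwa [← hT.inner_left_eq_inner_right b a, norm_inner_symm (T b) a, ← sq] at h

theorem IsPositive.norm_inner_map_self_sq {T : E →L[𝕜] E} (hT : T.IsPositive) (a : E) :
    ‖inner 𝕜 a (T a)‖ ^ 2 = re (inner 𝕜 a (T a)) ^ 2 := by
  have hreal : (re (inner 𝕜 (T a) a) : 𝕜) = inner 𝕜 (T a) a :=
    hT.isSymmetric.coe_re_inner_apply_self a
  rw [← hT.inner_left_eq_inner_right, ← hreal, norm_ofReal, sq_abs, ofReal_re]

theorem re_inner_smul_one_sub_apply (A : E →L[𝕜] E) (lam : ℝ) (y : E) :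
    re (inner 𝕜 y (((lam : 𝕜) • 1 - A) y)) = lam * ‖y‖ ^ 2 - re (inner 𝕜 y (A y)) := by
  simp [inner_sub_right, inner_smul_right, inner_self_eq_norm_sq_to_K]

variable {A : E →L[𝕜] E} {c lam : ℝ}

theorem isPositive_smul_one_sub (hA : A.IsSymmetric)
    (hc : ∀ y, re (inner 𝕜 y (A y)) ≤ c * ‖y‖ ^ 2) (hlam : c ≤ lam) :
    ((lam : 𝕜) • 1 - A).IsPositive := by
  refine ⟨fun v w => ?_, fun y => ?_⟩
  · simpa [inner_sub_left, inner_sub_right, inner_smul_left, inner_smul_right] using hA v w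
  · rw [reApplyInnerSelf, inner_re_symm, re_inner_smul_one_sub_apply]
    nlinarith [hc y, sq_nonneg ‖y‖]

theorem isUnit_sub_smul_one [CompleteSpace E]
    (hc : ∀ y, re (inner 𝕜 y (A y)) ≤ c * ‖y‖ ^ 2) (hlam : c < lam) :
    IsUnit (A - (lam : 𝕜) • 1) := by
  rw [← neg_sub, IsUnit.neg_iff]
  refine isUnit_of_forall_le_norm_inner_map _ (c := ⟨lam - c, by linarith⟩)
    (NNReal.coe_pos.mp (sub_pos.mpr hlam)) fun y => ?_
  calc ‖y‖ ^ 2 * (lam - c) ≤ lam * ‖y‖ ^ 2 - re (inner 𝕜 y (A y)) := by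
        nlinarith [hc y, sq_nonneg ‖y‖]
    _ = re (inner 𝕜 y (((lam : 𝕜) • 1 - A) y)) := (re_inner_smul_one_sub_apply A lam y).symm
    _ ≤ ‖inner 𝕜 (((lam : 𝕜) • 1 - A) y) y‖ := by
        rw [← norm_inner_symm]; exact re_le_norm _

theorem smul_one_sub_apply_ring_inverse_apply [CompleteSpace E]
    (hc : ∀ y, re (inner 𝕜 y (A y)) ≤ c * ‖y‖ ^ 2) (hlam : c < lam) (u : E) :
    ((lam : 𝕜) • 1 - A) (Ring.inverse (A - (lam : 𝕜) • 1) u) = -u := by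
  have h : (A - (lam : 𝕜) • 1) (Ring.inverse (A - (lam : 𝕜) • 1) u) = u := by
    simpa using congr($(Ring.mul_inverse_cancel _ (isUnit_sub_smul_one hc hlam)) u)
  rw [← neg_sub, neg_apply, h]

end ContinuousLinearMap

/-- The functional `λ₊(x,y)`: the larger eigenvalue of the 2×2 matrix `𝒯_{x,y}`. -/
noncomputable def lambdaPlus {H₁ H₂ : Type*}
    [NormedAddCommGroup H₁] [InnerProductSpace ℂ H₁] [CompleteSpace H₁]
    [NormedAddCommGroup H₂] [InnerProductSpace ℂ H₂] [CompleteSpace H₂]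
    (T12 : H₂ →ₗ.[ℂ] H₁) (T11 : T12.adjoint.domain →ₗ[ℂ] H₁) (T22 : H₂ →L[ℂ] H₂)
    (x : T12.adjoint.domain) (y : T12.domain) : ℝ :=
  ((inner ℂ (x : H₁) (T11 x) : ℂ).re / ‖(x : H₁)‖ ^ 2 +
      (inner ℂ (y : H₂) (T22 (y : H₂)) : ℂ).re / ‖(y : H₂)‖ ^ 2 +
    Real.sqrt (((inner ℂ (x : H₁) (T11 x) : ℂ).re / ‖(x : H₁)‖ ^ 2 -
        (inner ℂ (y : H₂) (T22 (y : H₂)) : ℂ).re / ‖(y : H₂)‖ ^ 2) ^ 2 +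
      4 * ‖(inner ℂ (x : H₁) (T12 y) : ℂ)‖ ^ 2 /
        (‖(x : H₁)‖ ^ 2 * ‖(y : H₂)‖ ^ 2))) / 2

section LambdaPlus

variable {H₁ H₂ : Type*}
    [NormedAddCommGroup H₁] [InnerProductSpace ℂ H₁] [CompleteSpace H₁]
    [NormedAddCommGroup H₂] [InnerProductSpace ℂ H₂] [CompleteSpace H₂]
    {T12 : H₂ →ₗ.[ℂ] H₁} {T11 : T12.adjoint.domain →ₗ[ℂ] H₁} {T22 : H₂ →L[ℂ] H₂}
    {x : T12.adjoint.domain} {y : T12.domain} {lam : ℝ}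

theorem lambdaPlus_le (hx : (x : H₁) ≠ 0) (hy : (y : H₂) ≠ 0)
    (hA : (inner ℂ (x : H₁) (T11 x)).re ≤ lam * ‖(x : H₁)‖ ^ 2)
    (hB : (inner ℂ (y : H₂) (T22 y)).re ≤ lam * ‖(y : H₂)‖ ^ 2)
    (h : ‖inner ℂ (x : H₁) (T12 y)‖ ^ 2 ≤ (lam * ‖(x : H₁)‖ ^ 2 - (inner ℂ (x : H₁) (T11 x)).re) *
      (lam * ‖(y : H₂)‖ ^ 2 - (inner ℂ (y : H₂) (T22 y)).re)) :
    lambdaPlus T12 T11 T22 x y ≤ lam := by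
  have hnx : 0 < ‖(x : H₁)‖ ^ 2 := by positivity
  have hny : 0 < ‖(y : H₂)‖ ^ 2 := by positivity
  rw [lambdaPlus, mul_div_assoc]
  refine add_add_sqrt_div_two_le ((div_le_iff₀ hnx).2 hA) ((div_le_iff₀ hny).2 hB) ?_
  rw [sub_div' hnx.ne', sub_div' hny.ne', div_mul_div_comm]
  exact div_le_div_of_nonneg_right h (by positivity)

theorem lambdaPlus_eq (hx : (x : H₁) ≠ 0) (hy : (y : H₂) ≠ 0)
    (hA : (inner ℂ (x : H₁) (T11 x)).re ≤ lam * ‖(x : H₁)‖ ^ 2)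
    (hB : (inner ℂ (y : H₂) (T22 y)).re ≤ lam * ‖(y : H₂)‖ ^ 2)
    (h : ‖inner ℂ (x : H₁) (T12 y)‖ ^ 2 = (lam * ‖(x : H₁)‖ ^ 2 - (inner ℂ (x : H₁) (T11 x)).re) *
      (lam * ‖(y : H₂)‖ ^ 2 - (inner ℂ (y : H₂) (T22 y)).re)) :
    lambdaPlus T12 T11 T22 x y = lam := by
  have hnx : 0 < ‖(x : H₁)‖ ^ 2 := by positivity
  have hny : 0 < ‖(y : H₂)‖ ^ 2 := by positivity
  rw [lambdaPlus, mul_div_assoc]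
  refine add_add_sqrt_div_two_eq ((div_le_iff₀ hnx).2 hA) ((div_le_iff₀ hny).2 hB) ?_
  rw [sub_div' hnx.ne', sub_div' hny.ne', div_mul_div_comm, h]

end LambdaPlus

theorem stmt_10_general {H₁ H₂ : Type*}
    [NormedAddCommGroup H₁] [InnerProductSpace ℂ H₁] [CompleteSpace H₁]
    [NormedAddCommGroup H₂] [InnerProductSpace ℂ H₂] [CompleteSpace H₂]
    (T12 : H₂ →ₗ.[ℂ] H₁) (hdense : Dense (T12.domain : Set H₂))
    (T22 : H₂ →L[ℂ] H₂) (hT22 : IsSelfAdjoint T22)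
    (c₂ : ℝ) (hc2 : ∀ y : H₂, (inner ℂ y (T22 y) : ℂ).re ≤ c₂ * ‖y‖ ^ 2)
    (T11 : T12.adjoint.domain →ₗ[ℂ] H₁)
    (x : T12.adjoint.domain) (hxne : (x : H₁) ≠ 0)
    (lam₀ : ℝ) (hlam₀ : c₂ < lam₀)
    (hzero : (inner ℂ (x : H₁) (T11 x) : ℂ).re - lam₀ * ‖(x : H₁)‖ ^ 2 -
      (inner ℂ (T12.adjoint x)
        (Ring.inverse (T22 - (lam₀ : ℂ) • (1 : H₂ →L[ℂ] H₂)) (T12.adjoint x)) : ℂ).re = 0)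
    (hm : Ring.inverse (T22 - (lam₀ : ℂ) • (1 : H₂ →L[ℂ] H₂)) (T12.adjoint x) ∈ T12.domain)
    (hy₀ne : Ring.inverse (T22 - (lam₀ : ℂ) • (1 : H₂ →L[ℂ] H₂)) (T12.adjoint x) ≠ 0) :
    lambdaPlus T12 T11 T22 x
      ⟨Ring.inverse (T22 - (lam₀ : ℂ) • (1 : H₂ →L[ℂ] H₂)) (T12.adjoint x), hm⟩ = lam₀ ∧
    sSup {r : ℝ | ∃ y : T12.domain, (y : H₂) ≠ 0 ∧ r = lambdaPlus T12 T11 T22 x y} = lam₀ := by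
  set u := T12.adjoint x
  set y₀ := Ring.inverse (T22 - (lam₀ : ℂ) • (1 : H₂ →L[ℂ] H₂)) u
  set P : H₂ →L[ℂ] H₂ := (lam₀ : ℂ) • 1 - T22
  have hP : P.IsPositive := ContinuousLinearMap.isPositive_smul_one_sub hT22.isSymmetric hc2 hlam₀.le
  have hPy₀ : P y₀ = -u := ContinuousLinearMap.smul_one_sub_apply_ring_inverse_apply hc2 hlam₀ u
  have hq : (inner ℂ y₀ (P y₀)).re = lam₀ * ‖(x : H₁)‖ ^ 2 - (inner ℂ (x : H₁) (T11 x)).re := by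
    rw [hPy₀, inner_neg_right, Complex.neg_re, ← inner_conj_symm, Complex.conj_re]
    linarith
  have hA : (inner ℂ (x : H₁) (T11 x)).re ≤ lam₀ * ‖(x : H₁)‖ ^ 2 := by
    have h0 : 0 ≤ (inner ℂ y₀ (P y₀)).re := hP.re_inner_nonneg_right y₀
    linarith
  have hPy (y : H₂) : (inner ℂ y (P y)).re = lam₀ * ‖y‖ ^ 2 - (inner ℂ y (T22 y)).re :=
    ContinuousLinearMap.re_inner_smul_one_sub_apply T22 lam₀ y
  have hB (y : H₂) : (inner ℂ y (T22 y)).re ≤ lam₀ * ‖y‖ ^ 2 := by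
    nlinarith [hc2 y, sq_nonneg ‖y‖]
  have hT12 (y : T12.domain) : ‖inner ℂ (x : H₁) (T12 y)‖ = ‖inner ℂ y₀ (P y)‖ := by
    rw [← LinearPMap.adjoint_isFormalAdjoint hdense x y, ← hP.inner_left_eq_inner_right, hPy₀,
      inner_neg_left, norm_neg]
  have hle (y : T12.domain) (hy : (y : H₂) ≠ 0) : lambdaPlus T12 T11 T22 x y ≤ lam₀ := by
    refine lambdaPlus_le hxne hy hA (hB y) ?_
    rw [hT12, ← hq, ← hPy]
    exact hP.norm_inner_map_sq_le y₀ y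
  have heq : lambdaPlus T12 T11 T22 x ⟨y₀, hm⟩ = lam₀ := by
    refine lambdaPlus_eq hxne hy₀ne hA (hB y₀) ?_
    rw [hT12, ← hq, ← hPy, ← sq]
    exact hP.norm_inner_map_self_sq y₀
  refine ⟨heq, IsGreatest.csSup_eq ⟨⟨⟨y₀, hm⟩, hy₀ne, heq.symm⟩, ?_⟩⟩
  rintro _ ⟨y, hy, rfl⟩
  exact hle y hy

/-- If `λ₀ > c₂` is a zero of `σ₁ˣ` and `y₀ := (T₂₂ − λ₀)⁻¹(T₁₂†x)` belongs to
`D(T₁₂)` and is nonzero, then `λ₊(x, y₀) = λ₀`; i.e. the supremum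
`sup{λ₊(x,y) : y ∈ D(T₁₂), y ≠ 0}` is attained at `y₀` and equals `λ₀`. -/
theorem stmt_10 {H₁ H₂ : Type*}
    [NormedAddCommGroup H₁] [InnerProductSpace ℂ H₁] [CompleteSpace H₁]
    [NormedAddCommGroup H₂] [InnerProductSpace ℂ H₂] [CompleteSpace H₂]
    (T12 : H₂ →ₗ.[ℂ] H₁) (hdense : Dense (T12.domain : Set H₂)) (hclosed : T12.IsClosed)
    (T22 : H₂ →L[ℂ] H₂) (hT22 : IsSelfAdjoint T22)
    (c₂ : ℝ) (hc2 : ∀ y : H₂, (inner ℂ y (T22 y) : ℂ).re ≤ c₂ * ‖y‖ ^ 2)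
    (T11 : T12.adjoint.domain →ₗ[ℂ] H₁)
    (hsymm : ∀ x x' : T12.adjoint.domain,
      (inner ℂ (x : H₁) (T11 x') : ℂ) = inner ℂ (T11 x) (x' : H₁))
    (x : T12.adjoint.domain) (hxne : (x : H₁) ≠ 0)
    (lam₀ : ℝ) (hlam₀ : c₂ < lam₀)
    (hzero : (inner ℂ (x : H₁) (T11 x) : ℂ).re - lam₀ * ‖(x : H₁)‖ ^ 2 -
      (inner ℂ (T12.adjoint x)
        (Ring.inverse (T22 - (lam₀ : ℂ) • (1 : H₂ →L[ℂ] H₂)) (T12.adjoint x)) : ℂ).re = 0)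
    (hm : Ring.inverse (T22 - (lam₀ : ℂ) • (1 : H₂ →L[ℂ] H₂)) (T12.adjoint x) ∈ T12.domain)
    (hy₀ne : Ring.inverse (T22 - (lam₀ : ℂ) • (1 : H₂ →L[ℂ] H₂)) (T12.adjoint x) ≠ 0) :
    lambdaPlus T12 T11 T22 x
      ⟨Ring.inverse (T22 - (lam₀ : ℂ) • (1 : H₂ →L[ℂ] H₂)) (T12.adjoint x), hm⟩ = lam₀ ∧
    sSup {r : ℝ | ∃ y : T12.domain, (y : H₂) ≠ 0 ∧ r = lambdaPlus T12 T11 T22 x y} = lam₀ :=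
  stmt_10_general T12 hdense T22 hT22 c₂ hc2 T11 x hxne lam₀ hlam₀ hzero hm hy₀ne
end

section
/- Assume there are constants a, ã ≥ 0 such that ‖T₁₁ x‖ ≤ a‖x‖ + ã‖T₁₂† x‖ for all x ∈ D(T₁₂†), and c₂ ∈ ℝ with re⟪y, T₂₂ y⟫ ≤ c₂‖y‖² for all y ∈ H₂. Then for all nonzero x ∈ D(T₁₂†) and nonzero y ∈ D(T₁₂), writing t := ‖T₁₂† x‖/‖x‖, one has λ₊(x,y) ≤ ½( a + c₂ + ã·t + Real.sqrt((ã·t + |a − c₂|)² + 4t²) ). -/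
lemma Real.sqrt_sq_add_le_sqrt_sq_add_add_abs_sub (u v : ℝ) {c : ℝ} (hc : 0 ≤ c) :
    √(u ^ 2 + c) ≤ √(v ^ 2 + c) + |u - v| := by
  have hv : |v| ≤ √(v ^ 2 + c) := by
    rw [← Real.sqrt_sq_eq_abs]
    exact Real.sqrt_le_sqrt (by linarith)
  have hsq : (√(v ^ 2 + c)) ^ 2 = v ^ 2 + c := Real.sq_sqrt (by positivity)
  have hcross : v * (u - v) ≤ |v| * |u - v| := abs_mul v (u - v) ▸ le_abs_self _
  rw [Real.sqrt_le_left (by positivity)]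
  nlinarith [abs_nonneg (u - v), sq_abs (u - v), Real.sqrt_nonneg (v ^ 2 + c)]

lemma add_add_sqrt_sub_sq_add_le_of_le {p q p' q' c c' : ℝ}
    (hp : p ≤ p') (hq : q ≤ q') (hc : c ≤ c') (hc' : 0 ≤ c') :
    p + q + √((p - q) ^ 2 + c) ≤ p' + q' + √((p' - q') ^ 2 + c') := by
  have hdiff : |p - q - (p' - q')| ≤ (p' - p) + (q' - q) := by
    rw [abs_le]
    constructor <;> linarith
  have := Real.sqrt_sq_add_le_sqrt_sq_add_add_abs_sub (p - q) (p' - q') hc'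
  have := Real.sqrt_le_sqrt (show (p - q) ^ 2 + c ≤ (p - q) ^ 2 + c' by linarith)
  linarith

lemma re_inner_div_norm_sq_le {𝕜 E : Type*} [RCLike 𝕜] [NormedAddCommGroup E]
    [InnerProductSpace 𝕜 E] {x v : E} (hx : x ≠ 0) {a a' s : ℝ}
    (hv : ‖v‖ ≤ a * ‖x‖ + a' * s) :
    RCLike.re (inner 𝕜 x v) / ‖x‖ ^ 2 ≤ a + a' * (s / ‖x‖) := by
  have hx' : 0 < ‖x‖ := norm_pos_iff.2 hx
  rw [div_le_iff₀ (by positivity)]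
  calc RCLike.re (inner 𝕜 x v) ≤ ‖x‖ * ‖v‖ := re_inner_le_norm x v
    _ ≤ ‖x‖ * (a * ‖x‖ + a' * s) := by gcongr
    _ = (a + a' * (s / ‖x‖)) * ‖x‖ ^ 2 := by field_simp

lemma LinearPMap.norm_inner_apply_le_norm_adjoint_apply_mul_norm {𝕜 E F : Type*} [RCLike 𝕜]
    [NormedAddCommGroup E] [InnerProductSpace 𝕜 E] [CompleteSpace E]
    [NormedAddCommGroup F] [InnerProductSpace 𝕜 F] [CompleteSpace F]
    {T : E →ₗ.[𝕜] F} (hT : Dense (T.domain : Set E)) (x : T.adjoint.domain) (y : T.domain) :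
    ‖inner 𝕜 (x : F) (T y)‖ ≤ ‖T.adjoint x‖ * ‖(y : E)‖ := by
  rw [← T.adjoint_isFormalAdjoint hT x y]
  exact norm_inner_le_norm _ _

lemma four_mul_sq_div_le_four_mul_sq {m r s u : ℝ} (hr : 0 < r) (hs : 0 < s) (hm : 0 ≤ m)
    (hmu : m ≤ u * s) : 4 * m ^ 2 / (r ^ 2 * s ^ 2) ≤ 4 * (u / r) ^ 2 := by
  have hratio : m / (r * s) ≤ u / r := by
    rw [div_le_div_iff₀ (by positivity) hr]
    nlinarith
  calc 4 * m ^ 2 / (r ^ 2 * s ^ 2) = 4 * (m / (r * s)) ^ 2 := by ring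
    _ ≤ 4 * (u / r) ^ 2 := by gcongr

theorem stmt_13_general {H₁ H₂ : Type*}
    [NormedAddCommGroup H₁] [InnerProductSpace ℂ H₁] [CompleteSpace H₁]
    [NormedAddCommGroup H₂] [InnerProductSpace ℂ H₂] [CompleteSpace H₂]
    (T12 : H₂ →ₗ.[ℂ] H₁) (hdense : Dense (T12.domain : Set H₂))
    (T22 : H₂ →L[ℂ] H₂)
    (T11 : T12.adjoint.domain →ₗ[ℂ] H₁)
    (a a' : ℝ) (ha' : 0 ≤ a')
    (hrelbound : ∀ x : T12.adjoint.domain, ‖T11 x‖ ≤ a * ‖(x : H₁)‖ + a' * ‖T12.adjoint x‖)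
    (c₂ : ℝ) (hc2 : ∀ y : H₂, (inner ℂ y (T22 y) : ℂ).re ≤ c₂ * ‖y‖ ^ 2) :
    ∀ (x : T12.adjoint.domain) (y : T12.domain), (x : H₁) ≠ 0 → (y : H₂) ≠ 0 →
      ∀ t : ℝ, t = ‖T12.adjoint x‖ / ‖(x : H₁)‖ →
        lambdaPlus T12 T11 T22 x y ≤
          (a + c₂ + a' * t + Real.sqrt ((a' * t + |a - c₂|) ^ 2 + 4 * t ^ 2)) / 2 := by
  intro x y hx hy t ht
  have hdiag₁ := re_inner_div_norm_sq_le (𝕜 := ℂ) hx (hrelbound x)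
  have hdiag₂ : (inner ℂ (y : H₂) (T22 y)).re / ‖(y : H₂)‖ ^ 2 ≤ c₂ :=
    (div_le_iff₀ (by positivity)).2 (hc2 y)
  have hoff := four_mul_sq_div_le_four_mul_sq (norm_pos_iff.2 hx) (norm_pos_iff.2 hy)
    (norm_nonneg _) (T12.norm_inner_apply_le_norm_adjoint_apply_mul_norm hdense x y)
  rw [← ht] at hdiag₁ hoff
  have hgap : |a + a' * t - c₂| ≤ a' * t + |a - c₂| := by
    have ht0 : 0 ≤ a' * t := mul_nonneg ha' (ht ▸ by positivity)
    have := abs_add_le (a' * t) (a - c₂)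
    rwa [abs_of_nonneg ht0, show a' * t + (a - c₂) = a + a' * t - c₂ by ring] at this
  calc lambdaPlus T12 T11 T22 x y
      ≤ (a + a' * t + c₂ + √((a + a' * t - c₂) ^ 2 + 4 * t ^ 2)) / 2 := by
        unfold lambdaPlus
        gcongr ?_ / 2
        exact add_add_sqrt_sub_sq_add_le_of_le hdiag₁ hdiag₂ hoff (by positivity)
    _ ≤ (a + c₂ + a' * t + √((a' * t + |a - c₂|) ^ 2 + 4 * t ^ 2)) / 2 := by
        have hsq := sq_le_sq' (abs_le.1 hgap).1 (abs_le.1 hgap).2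
        have := Real.sqrt_le_sqrt (add_le_add_left hsq (4 * t ^ 2))
        linarith

/-- If `‖T₁₁x‖ ≤ a‖x‖ + ã‖T₁₂†x‖` and `re⟪y, T₂₂y⟫ ≤ c₂‖y‖²`, then with
`t := ‖T₁₂†x‖/‖x‖` one has `λ₊(x,y) ≤ ½(a + c₂ + ãt + √((ãt + |a − c₂|)² + 4t²))`. -/
theorem stmt_13 {H₁ H₂ : Type*}
    [NormedAddCommGroup H₁] [InnerProductSpace ℂ H₁] [CompleteSpace H₁]
    [NormedAddCommGroup H₂] [InnerProductSpace ℂ H₂] [CompleteSpace H₂]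
    (T12 : H₂ →ₗ.[ℂ] H₁) (hdense : Dense (T12.domain : Set H₂)) (hclosed : T12.IsClosed)
    (T22 : H₂ →L[ℂ] H₂) (hT22 : IsSelfAdjoint T22)
    (T11 : T12.adjoint.domain →ₗ[ℂ] H₁)
    (hsymm : ∀ x x' : T12.adjoint.domain,
      (inner ℂ (x : H₁) (T11 x') : ℂ) = inner ℂ (T11 x) (x' : H₁))
    (a a' : ℝ) (ha : 0 ≤ a) (ha' : 0 ≤ a')
    (hrelbound : ∀ x : T12.adjoint.domain, ‖T11 x‖ ≤ a * ‖(x : H₁)‖ + a' * ‖T12.adjoint x‖)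
    (c₂ : ℝ) (hc2 : ∀ y : H₂, (inner ℂ y (T22 y) : ℂ).re ≤ c₂ * ‖y‖ ^ 2) :
    ∀ (x : T12.adjoint.domain) (y : T12.domain), (x : H₁) ≠ 0 → (y : H₂) ≠ 0 →
      ∀ t : ℝ, t = ‖T12.adjoint x‖ / ‖(x : H₁)‖ →
        lambdaPlus T12 T11 T22 x y ≤
          (a + c₂ + a' * t + Real.sqrt ((a' * t + |a - c₂|) ^ 2 + 4 * t ^ 2)) / 2 :=
  stmt_13_general T12 hdense T22 T11 a a' ha' hrelbound c₂ hc2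
end

section
/- Assume there are constants c₁, c₂⁻ ∈ ℝ with re⟪x, T₁₁ x⟫ ≥ c₁‖x‖² for all x ∈ D(T₁₂†) and re⟪y, T₂₂ y⟫ ≥ c₂⁻‖y‖² for all y ∈ H₂. Then for all nonzero x ∈ D(T₁₂†) and nonzero y ∈ D(T₁₂), one has λ₊(x,y) ≥ ½(c₁ + c₂⁻) + Real.sqrt( ¼(c₁ − c₂⁻)² + |⟪x, T₁₂ y⟫|²/(‖x‖²‖y‖²) ). -/
/-!
`λ₊(x,y) = ½(A + B + √((A − B)² + 4m))` is the larger eigenvalue of the Hermitian matrix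
`[[A, ·], [·, B]]` with off-diagonal modulus `√m`, and as such it is nondecreasing in each
diagonal entry: `u ↦ √(u² + k)` is `1`-Lipschitz, so moving `A` or `B` up by `δ` changes the
square root by at most `δ`. The hypotheses say exactly that `A ≥ c₁` and `B ≥ c₂⁻`.
-/

namespace Real

theorem sqrt_sq_add_le_abs_sub_add_sqrt_sq_add (u v : ℝ) {k : ℝ} (hk : 0 ≤ k) :
    √(u ^ 2 + k) ≤ |u - v| + √(v ^ 2 + k) := by
  have hv : |v| ≤ √(v ^ 2 + k) := by
    rw [← sqrt_sq_eq_abs]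
    exact sqrt_le_sqrt (by linarith)
  have hcross : v * (u - v) ≤ |u - v| * √(v ^ 2 + k) :=
    calc v * (u - v) ≤ |v| * |u - v| := by rw [← abs_mul]; exact le_abs_self _
      _ ≤ √(v ^ 2 + k) * |u - v| := by gcongr
      _ = |u - v| * √(v ^ 2 + k) := mul_comm _ _
  rw [sqrt_le_iff]
  refine ⟨by positivity, ?_⟩
  have hsq : √(v ^ 2 + k) ^ 2 = v ^ 2 + k := sq_sqrt (by positivity)
  nlinarith [sq_abs (u - v)]

theorem add_add_sqrt_sub_sq_add_le {a b a' b' k : ℝ} (hk : 0 ≤ k) (ha : a ≤ a') (hb : b ≤ b') :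
    a + b + √((a - b) ^ 2 + k) ≤ a' + b' + √((a' - b') ^ 2 + k) := by
  have hlip := sqrt_sq_add_le_abs_sub_add_sqrt_sq_add (a - b) (a' - b') hk
  have hdiff : |(a - b) - (a' - b')| ≤ (a' - a) + (b' - b) :=
    abs_le.mpr ⟨by linarith, by linarith⟩
  linarith

theorem add_div_two_add_sqrt_sub_sq_div_four_add (a b m : ℝ) :
    (a + b) / 2 + √((a - b) ^ 2 / 4 + m) = (a + b + √((a - b) ^ 2 + 4 * m)) / 2 := by
  have hsqrt : √((a - b) ^ 2 / 4 + m) = √((a - b) ^ 2 + 4 * m) / 2 := by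
    rw [show (a - b) ^ 2 / 4 + m = ((a - b) ^ 2 + 4 * m) / 2 ^ 2 by ring,
      sqrt_div' _ (by positivity), sqrt_sq zero_le_two]
  rw [hsqrt]
  ring

end Real

theorem stmt_14_general {H₁ H₂ : Type*}
    [NormedAddCommGroup H₁] [InnerProductSpace ℂ H₁] [CompleteSpace H₁]
    [NormedAddCommGroup H₂] [InnerProductSpace ℂ H₂] [CompleteSpace H₂]
    (T12 : H₂ →ₗ.[ℂ] H₁)
    (T22 : H₂ →L[ℂ] H₂)
    (T11 : T12.adjoint.domain →ₗ[ℂ] H₁)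
    (c₁ c₂' : ℝ)
    (hc1 : ∀ x : T12.adjoint.domain,
      c₁ * ‖(x : H₁)‖ ^ 2 ≤ (inner ℂ (x : H₁) (T11 x) : ℂ).re)
    (hc2' : ∀ y : H₂, c₂' * ‖y‖ ^ 2 ≤ (inner ℂ y (T22 y) : ℂ).re) :
    ∀ (x : T12.adjoint.domain) (y : T12.domain), (x : H₁) ≠ 0 → (y : H₂) ≠ 0 →
      (c₁ + c₂') / 2 + Real.sqrt ((c₁ - c₂') ^ 2 / 4 +
          ‖(inner ℂ (x : H₁) (T12 y) : ℂ)‖ ^ 2 / (‖(x : H₁)‖ ^ 2 * ‖(y : H₂)‖ ^ 2)) ≤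
        lambdaPlus T12 T11 T22 x y := by
  intro x y hx hy
  have hA : c₁ ≤ (inner ℂ (x : H₁) (T11 x) : ℂ).re / ‖(x : H₁)‖ ^ 2 :=
    (le_div_iff₀ (pow_pos (norm_pos_iff.mpr hx) 2)).mpr (hc1 x)
  have hB : c₂' ≤ (inner ℂ (y : H₂) (T22 y) : ℂ).re / ‖(y : H₂)‖ ^ 2 :=
    (le_div_iff₀ (pow_pos (norm_pos_iff.mpr hy) 2)).mpr (hc2' y)
  rw [Real.add_div_two_add_sqrt_sub_sq_div_four_add, lambdaPlus, mul_div_assoc]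
  gcongr ?_ / 2
  exact Real.add_add_sqrt_sub_sq_add_le (by positivity) hA hB

/-- If `re⟪x, T₁₁x⟫ ≥ c₁‖x‖²` and `re⟪y, T₂₂y⟫ ≥ c₂⁻‖y‖²`, then
`λ₊(x,y) ≥ ½(c₁ + c₂⁻) + √(¼(c₁ − c₂⁻)² + |⟪x, T₁₂y⟫|²/(‖x‖²‖y‖²))`. -/
theorem stmt_14 {H₁ H₂ : Type*}
    [NormedAddCommGroup H₁] [InnerProductSpace ℂ H₁] [CompleteSpace H₁]
    [NormedAddCommGroup H₂] [InnerProductSpace ℂ H₂] [CompleteSpace H₂]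
    (T12 : H₂ →ₗ.[ℂ] H₁) (hdense : Dense (T12.domain : Set H₂)) (hclosed : T12.IsClosed)
    (T22 : H₂ →L[ℂ] H₂) (hT22 : IsSelfAdjoint T22)
    (T11 : T12.adjoint.domain →ₗ[ℂ] H₁)
    (hsymm : ∀ x x' : T12.adjoint.domain,
      (inner ℂ (x : H₁) (T11 x') : ℂ) = inner ℂ (T11 x) (x' : H₁))
    (c₁ c₂' : ℝ)
    (hc1 : ∀ x : T12.adjoint.domain,
      c₁ * ‖(x : H₁)‖ ^ 2 ≤ (inner ℂ (x : H₁) (T11 x) : ℂ).re)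
    (hc2' : ∀ y : H₂, c₂' * ‖y‖ ^ 2 ≤ (inner ℂ y (T22 y) : ℂ).re) :
    ∀ (x : T12.adjoint.domain) (y : T12.domain), (x : H₁) ≠ 0 → (y : H₂) ≠ 0 →
      (c₁ + c₂') / 2 + Real.sqrt ((c₁ - c₂') ^ 2 / 4 +
          ‖(inner ℂ (x : H₁) (T12 y) : ℂ)‖ ^ 2 / (‖(x : H₁)‖ ^ 2 * ‖(y : H₂)‖ ^ 2)) ≤
        lambdaPlus T12 T11 T22 x y :=
  stmt_14_general T12 T22 T11 c₁ c₂' hc1 hc2'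
end

section
/- Assume there are constants c₁⁺, c₂ ∈ ℝ with re⟪x, T₁₁ x⟫ ≤ c₁⁺‖x‖² for all x ∈ D(T₁₂†) and re⟪y, T₂₂ y⟫ ≤ c₂‖y‖² for all y ∈ H₂. Then for all nonzero x ∈ D(T₁₂†) and nonzero y ∈ D(T₁₂), one has λ₊(x,y) ≤ ½(c₁⁺ + c₂) + Real.sqrt( ¼(c₁⁺ − c₂)² + ‖T₁₂† x‖²/‖x‖² ). -/
/-- The larger eigenvalue of a Hermitian matrix `!![a, z; conj z, b]` with `‖z‖ ^ 2 = c`. -/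
noncomputable def upperEigenvalue (a b c : ℝ) : ℝ :=
  (a + b + √((a - b) ^ 2 + 4 * c)) / 2

/- With `a' = a + u`, `b' = b + v` and `s'` the square root on the right, the needed inequality
`(a - b)² + 4c ≤ (u + v + s')²` reduces to `0 ≤ 4uv + 2u(s' + a' - b') + 2v(s' - a' + b')`,
which holds because `|a' - b'| ≤ s'`. -/
theorem upperEigenvalue_mono {a b c a' b' c' : ℝ} (ha : a ≤ a') (hb : b ≤ b') (hc : c ≤ c')
    (hc₀ : 0 ≤ c) : upperEigenvalue a b c ≤ upperEigenvalue a' b' c' := by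
  set s' := √((a' - b') ^ 2 + 4 * c')
  have hs'_sq : s' ^ 2 = (a' - b') ^ 2 + 4 * c' := Real.sq_sqrt (by positivity [hc₀.trans hc])
  obtain ⟨hs'_lower, hs'_upper⟩ := abs_le.1 (Real.abs_le_sqrt (by linarith) : |a' - b'| ≤ s')
  have hsqrt : √((a - b) ^ 2 + 4 * c) ≤ (a' - a) + (b' - b) + s' := by
    refine Real.sqrt_le_iff.2 ⟨by linarith, ?_⟩
    nlinarith [mul_nonneg (sub_nonneg.2 ha) (sub_nonneg.2 hb),
      mul_nonneg (sub_nonneg.2 ha) (by linarith : 0 ≤ s' + (a' - b')),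
      mul_nonneg (sub_nonneg.2 hb) (by linarith : 0 ≤ s' - (a' - b'))]
  unfold upperEigenvalue
  linarith

theorem upperEigenvalue_eq_half_add_sqrt {a b c : ℝ} :
    upperEigenvalue a b c = (a + b) / 2 + √((a - b) ^ 2 / 4 + c) := by
  rw [upperEigenvalue, show (a - b) ^ 2 + 4 * c = 2 ^ 2 * ((a - b) ^ 2 / 4 + c) by ring,
    Real.sqrt_mul (by positivity), Real.sqrt_sq zero_le_two]
  ring

namespace LinearPMap.IsFormalAdjoint

variable {𝕜 E F : Type*} [RCLike 𝕜] [NormedAddCommGroup E] [InnerProductSpace 𝕜 E]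
  [NormedAddCommGroup F] [InnerProductSpace 𝕜 F] {T : E →ₗ.[𝕜] F} {S : F →ₗ.[𝕜] E}

theorem norm_inner_le (h : T.IsFormalAdjoint S) (x : T.domain) (y : S.domain) :
    ‖(inner 𝕜 (x : E) (S y) : 𝕜)‖ ≤ ‖T x‖ * ‖(y : F)‖ :=
  h x y ▸ norm_inner_le_norm _ _

theorem norm_inner_sq_div_le (h : T.IsFormalAdjoint S) (x : T.domain) {y : S.domain}
    (hy : (y : F) ≠ 0) :
    ‖(inner 𝕜 (x : E) (S y) : 𝕜)‖ ^ 2 / (‖(x : E)‖ ^ 2 * ‖(y : F)‖ ^ 2) ≤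
      ‖T x‖ ^ 2 / ‖(x : E)‖ ^ 2 := by
  rw [← mul_div_mul_right (‖T x‖ ^ 2) (‖(x : E)‖ ^ 2) (pow_pos (norm_pos_iff.2 hy) 2).ne',
    ← mul_pow ‖T x‖]
  gcongr
  exact h.norm_inner_le x y

end LinearPMap.IsFormalAdjoint

theorem stmt_15_general {H₁ H₂ : Type*}
    [NormedAddCommGroup H₁] [InnerProductSpace ℂ H₁] [CompleteSpace H₁]
    [NormedAddCommGroup H₂] [InnerProductSpace ℂ H₂] [CompleteSpace H₂]
    (T12 : H₂ →ₗ.[ℂ] H₁) (hdense : Dense (T12.domain : Set H₂))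
    (T22 : H₂ →L[ℂ] H₂)
    (T11 : T12.adjoint.domain →ₗ[ℂ] H₁)
    (c₁' c₂ : ℝ)
    (hc1' : ∀ x : T12.adjoint.domain,
      (inner ℂ (x : H₁) (T11 x) : ℂ).re ≤ c₁' * ‖(x : H₁)‖ ^ 2)
    (hc2 : ∀ y : H₂, (inner ℂ y (T22 y) : ℂ).re ≤ c₂ * ‖y‖ ^ 2) :
    ∀ (x : T12.adjoint.domain) (y : T12.domain), (x : H₁) ≠ 0 → (y : H₂) ≠ 0 →
      lambdaPlus T12 T11 T22 x y ≤
        (c₁' + c₂) / 2 + Real.sqrt ((c₁' - c₂) ^ 2 / 4 +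
          ‖T12.adjoint x‖ ^ 2 / ‖(x : H₁)‖ ^ 2) := by
  intro x y hx hy
  have hA := (div_le_iff₀ (pow_pos (norm_pos_iff.2 hx) 2)).2 (hc1' x)
  have hB := (div_le_iff₀ (pow_pos (norm_pos_iff.2 hy) 2)).2 (hc2 y)
  have hC := (T12.adjoint_isFormalAdjoint hdense).norm_inner_sq_div_le x hy
  calc lambdaPlus T12 T11 T22 x y
      ≤ upperEigenvalue c₁' c₂ (‖T12.adjoint x‖ ^ 2 / ‖(x : H₁)‖ ^ 2) := by
        rw [lambdaPlus, mul_div_assoc]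
        exact upperEigenvalue_mono hA hB hC (by positivity)
    _ = _ := upperEigenvalue_eq_half_add_sqrt

/-- If `re⟪x, T₁₁x⟫ ≤ c₁⁺‖x‖²` and `re⟪y, T₂₂y⟫ ≤ c₂‖y‖²`, then
`λ₊(x,y) ≤ ½(c₁⁺ + c₂) + √(¼(c₁⁺ − c₂)² + ‖T₁₂†x‖²/‖x‖²)`. -/
theorem stmt_15 {H₁ H₂ : Type*}
    [NormedAddCommGroup H₁] [InnerProductSpace ℂ H₁] [CompleteSpace H₁]
    [NormedAddCommGroup H₂] [InnerProductSpace ℂ H₂] [CompleteSpace H₂]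
    (T12 : H₂ →ₗ.[ℂ] H₁) (hdense : Dense (T12.domain : Set H₂)) (hclosed : T12.IsClosed)
    (T22 : H₂ →L[ℂ] H₂) (hT22 : IsSelfAdjoint T22)
    (T11 : T12.adjoint.domain →ₗ[ℂ] H₁)
    (hsymm : ∀ x x' : T12.adjoint.domain,
      (inner ℂ (x : H₁) (T11 x') : ℂ) = inner ℂ (T11 x) (x' : H₁))
    (c₁' c₂ : ℝ)
    (hc1' : ∀ x : T12.adjoint.domain,
      (inner ℂ (x : H₁) (T11 x) : ℂ).re ≤ c₁' * ‖(x : H₁)‖ ^ 2)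
    (hc2 : ∀ y : H₂, (inner ℂ y (T22 y) : ℂ).re ≤ c₂ * ‖y‖ ^ 2) :
    ∀ (x : T12.adjoint.domain) (y : T12.domain), (x : H₁) ≠ 0 → (y : H₂) ≠ 0 →
      lambdaPlus T12 T11 T22 x y ≤
        (c₁' + c₂) / 2 + Real.sqrt ((c₁' - c₂) ^ 2 / 4 +
          ‖T12.adjoint x‖ ^ 2 / ‖(x : H₁)‖ ^ 2) :=
  stmt_15_general T12 hdense T22 T11 c₁' c₂ hc1' hc2
end

section
/- Let D₁ be a bounded self-adjoint operator on H₁ and D₂ a bounded self-adjoint operator on H₂ with ‖D₁‖ ≤ c and ‖D₂‖ ≤ c for some c ≥ 0, and let b > 0 satisfy ‖B g‖ ≥ b‖g‖ for all g ∈ D(B) and ‖B† f‖ ≥ b‖f‖ for all f ∈ D(B†). Suppose λ ∈ ℝ is an eigenvalue of the block operator 𝒜(f,g) = (D₁ f + B g, B† f + D₂ g), i.e. there is a nonzero pair (f,g) with f ∈ D(B†), g ∈ D(B), D₁ f + B g = λ f and B† f + D₂ g = λ g. Then |λ| ≥ b − c. In particular, if b > 2c, then 𝒜 has no eigenvalue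 in the interval [−c, c]. -/
/-!
Each row of the eigenvalue equation isolates one off-diagonal term: `B g = λ f - D₁ f` and
`B† f = λ g - D₂ g`. The lower bounds on `B` and `B†` then give `b ‖g‖ ≤ (|λ| + c) ‖f‖` and
`b ‖f‖ ≤ (|λ| + c) ‖g‖`; adding them and dividing by `‖f‖ + ‖g‖ > 0` yields `b ≤ |λ| + c`.
-/

theorem norm_le_of_add_eq_smul {𝕜 E : Type*} [NontriviallyNormedField 𝕜]
    [NormedAddCommGroup E] [NormedSpace 𝕜 E] {D : E →L[𝕜] E} {c : ℝ} (hD : ‖D‖ ≤ c)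
    {x y : E} {lam : 𝕜} (h : D x + y = lam • x) : ‖y‖ ≤ (‖lam‖ + c) * ‖x‖ :=
  calc ‖y‖ = ‖lam • x - D x‖ := by rw [← h, add_sub_cancel_left]
    _ ≤ ‖lam • x‖ + ‖D x‖ := norm_sub_le _ _
    _ ≤ ‖lam‖ * ‖x‖ + c * ‖x‖ := by
      rw [norm_smul]
      gcongr
      exact D.le_of_opNorm_le hD x
    _ = (‖lam‖ + c) * ‖x‖ := (add_mul _ _ _).symm

theorem le_of_mul_le_mul_cross {a b x y : ℝ} (hxy : 0 < x + y)
    (hx : b * x ≤ a * y) (hy : b * y ≤ a * x) : b ≤ a :=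
  le_of_mul_le_mul_right (by linarith) hxy

theorem stmt_17_general {H₁ H₂ : Type*}
    [NormedAddCommGroup H₁] [InnerProductSpace ℂ H₁]
    [NormedAddCommGroup H₂] [InnerProductSpace ℂ H₂] [CompleteSpace H₂]
    (B : H₂ →ₗ.[ℂ] H₁)
    (D₁ : H₁ →L[ℂ] H₁)
    (D₂ : H₂ →L[ℂ] H₂)
    (c : ℝ) (hD₁n : ‖D₁‖ ≤ c) (hD₂n : ‖D₂‖ ≤ c)
    (b : ℝ)
    (hBg : ∀ g : B.domain, b * ‖(g : H₂)‖ ≤ ‖B g‖)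
    (hBf : ∀ f : B.adjoint.domain, b * ‖(f : H₁)‖ ≤ ‖B.adjoint f‖)
    (lam : ℝ) (f : B.adjoint.domain) (g : B.domain)
    (hne : ¬((f : H₁) = 0 ∧ (g : H₂) = 0))
    (heq1 : D₁ (f : H₁) + B g = (lam : ℂ) • (f : H₁))
    (heq2 : B.adjoint f + D₂ (g : H₂) = (lam : ℂ) • (g : H₂)) :
    b - c ≤ |lam| ∧ (2 * c < b → lam ∉ Set.Icc (-c) c) := by
  have hBg' : b * ‖(g : H₂)‖ ≤ (|lam| + c) * ‖(f : H₁)‖ := by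
    simpa using (hBg g).trans (norm_le_of_add_eq_smul hD₁n heq1)
  have hBf' : b * ‖(f : H₁)‖ ≤ (|lam| + c) * ‖(g : H₂)‖ := by
    simpa using (hBf f).trans (norm_le_of_add_eq_smul hD₂n ((add_comm _ _).trans heq2))
  have hpos : 0 < ‖(f : H₁)‖ + ‖(g : H₂)‖ := by
    rcases not_and_or.mp hne with h | h
    · exact add_pos_of_pos_of_nonneg (norm_pos_iff.mpr h) (norm_nonneg _)
    · exact add_pos_of_nonneg_of_pos (norm_nonneg _) (norm_pos_iff.mpr h)
  have key : b - c ≤ |lam| := by linarith [le_of_mul_le_mul_cross hpos hBf' hBg']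
  refine ⟨key, fun h2c hmem => ?_⟩
  linarith [abs_le.mpr hmem]

/-- If `‖D₁‖, ‖D₂‖ ≤ c` and `‖Bg‖ ≥ b‖g‖`, `‖B†f‖ ≥ b‖f‖`, then every real
eigenvalue `λ` of the block operator `𝒜(f,g) = (D₁f + Bg, B†f + D₂g)` satisfies `|λ| ≥ b − c`;
in particular if `b > 2c` then `𝒜` has no eigenvalue in `[−c, c]`. -/
theorem stmt_17 {H₁ H₂ : Type*}
    [NormedAddCommGroup H₁] [InnerProductSpace ℂ H₁] [CompleteSpace H₁]
    [NormedAddCommGroup H₂] [InnerProductSpace ℂ H₂] [CompleteSpace H₂]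
    (B : H₂ →ₗ.[ℂ] H₁) (hdense : Dense (B.domain : Set H₂)) (hclosed : B.IsClosed)
    (D₁ : H₁ →L[ℂ] H₁) (hD₁ : IsSelfAdjoint D₁)
    (D₂ : H₂ →L[ℂ] H₂) (hD₂ : IsSelfAdjoint D₂)
    (c : ℝ) (hc : 0 ≤ c) (hD₁n : ‖D₁‖ ≤ c) (hD₂n : ‖D₂‖ ≤ c)
    (b : ℝ) (hb : 0 < b)
    (hBg : ∀ g : B.domain, b * ‖(g : H₂)‖ ≤ ‖B g‖)
    (hBf : ∀ f : B.adjoint.domain, b * ‖(f : H₁)‖ ≤ ‖B.adjoint f‖)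
    (lam : ℝ) (f : B.adjoint.domain) (g : B.domain)
    (hne : ¬((f : H₁) = 0 ∧ (g : H₂) = 0))
    (heq1 : D₁ (f : H₁) + B g = (lam : ℂ) • (f : H₁))
    (heq2 : B.adjoint f + D₂ (g : H₂) = (lam : ℂ) • (g : H₂)) :
    b - c ≤ |lam| ∧ (2 * c < b → lam ∉ Set.Icc (-c) c) :=
  stmt_17_general B D₁ D₂ c hD₁n hD₂n b hBg hBf lam f g hne heq1 heq2
end

section
/- Let μ, λ ∈ ℝ with λ > c₂, and suppose (x, y) with x ∈ D(T₁₂†), y ∈ D(T₁₂) is an eigenvector of the block operator with eigenvalue μ, i.e. T₁₁ x + T₁₂ y = μ x and T₁₂† x + T₂₂ y = μ y. Then re⟪x, T₁₁ x⟫ − λ‖x‖² − re⟪T₁₂† x, (T₂₂ − λ·I)⁻¹(T₁₂† x)⟫ = (μ − λ)(‖x‖² + ‖y‖²) − (μ − λ)² · re⟪y, (T₂₂ − λ·I)⁻¹ y⟫. -/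
/-!
Write `S = T₂₂ - λ`. Since `λ - T₂₂ ≥ λ - c₂ > 0` in the order of the C⋆-algebra of bounded
operators, `S` is invertible. The second eigen-equation reads `T₁₂† x = (μ - λ) y - S y`, hence
`y + S⁻¹ T₁₂† x = (μ - λ) S⁻¹ y`, and pairing with `T₁₂† x` gives
`⟪T₁₂† x, y⟫ + ⟪T₁₂† x, S⁻¹ T₁₂† x⟫ = (μ - λ)² ⟪y, S⁻¹ y⟫ - (μ - λ) ‖y‖²`.
The first eigen-equation gives `⟪x, T₁₁ x⟫ = μ ‖x‖² - ⟪x, T₁₂ y⟫ = μ ‖x‖² - ⟪T₁₂† x, y⟫`;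
combining the two and taking real parts yields the identity.
-/

open ContinuousLinearMap

section

variable {H : Type*} [NormedAddCommGroup H] [InnerProductSpace ℂ H] [CompleteSpace H]

theorem algebraMap_sub_nonneg_of_re_inner_le {T : H →L[ℂ] H} (hT : IsSelfAdjoint T) {c : ℝ}
    (hc : ∀ y, (inner ℂ y (T y)).re ≤ c * ‖y‖ ^ 2) :
    0 ≤ algebraMap ℝ (H →L[ℂ] H) c - T := by
  rw [nonneg_iff_isPositive, isPositive_def']
  refine ⟨(IsSelfAdjoint.algebraMap _ (.all c)).sub hT, fun y => ?_⟩
  have hcy : RCLike.re (inner ℂ (algebraMap ℝ (H →L[ℂ] H) c y) y) = c * ‖y‖ ^ 2 := by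
    simp [Algebra.algebraMap_eq_smul_one, ← Complex.ofReal_pow]
  rw [reApplyInnerSelf_apply, sub_apply, inner_sub_left, map_sub, inner_re_symm (T y), hcy,
    sub_nonneg]
  exact hc y

theorem isUnit_sub_smul_one_of_re_inner_le {T : H →L[ℂ] H} (hT : IsSelfAdjoint T) {c lam : ℝ}
    (hc : ∀ y, (inner ℂ y (T y)).re ≤ c * ‖y‖ ^ 2) (hlam : c < lam) :
    IsUnit (T - (lam : ℂ) • (1 : H →L[ℂ] H)) := by
  have hpos : IsStrictlyPositive (algebraMap ℝ (H →L[ℂ] H) (lam - c) +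
      (algebraMap ℝ (H →L[ℂ] H) c - T)) :=
    (isStrictlyPositive_algebraMap (sub_pos.2 hlam)).add_nonneg
      (algebraMap_sub_nonneg_of_re_inner_le hT hc)
  convert hpos.isUnit.neg using 1
  simp only [Algebra.algebraMap_eq_smul_one, Complex.coe_smul]
  module

theorem inner_smul_sub_apply_add_ringInverse {S : H →L[ℂ] H} (hS : IsSelfAdjoint S)
    (hSu : IsUnit S) (t : ℝ) (b : H) :
    inner ℂ ((t : ℂ) • b - S b) (b + Ring.inverse S ((t : ℂ) • b - S b)) =
      (t : ℂ) ^ 2 * inner ℂ b (Ring.inverse S b) - t * ‖b‖ ^ 2 := by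
  have hRS : Ring.inverse S (S b) = b := congr($(Ring.inverse_mul_cancel S hSu) b)
  have hSR : S (Ring.inverse S b) = b := congr($(Ring.mul_inverse_cancel S hSu) b)
  have hsum : b + Ring.inverse S ((t : ℂ) • b - S b) = (t : ℂ) • Ring.inverse S b := by
    rw [map_sub, map_smul, hRS, add_sub_cancel]
  have hsymm : inner ℂ (S b) (Ring.inverse S b) = inner ℂ b (S (Ring.inverse S b)) :=
    hS.isSymmetric _ _
  rw [hsum, inner_smul_right, inner_sub_left, inner_smul_left, hsymm, hSR,
    inner_self_eq_norm_sq_to_K, Complex.conj_ofReal, RCLike.ofReal_eq_complex_ofReal]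
  ring

end

theorem stmt_18_general {H₁ H₂ : Type*}
    [NormedAddCommGroup H₁] [InnerProductSpace ℂ H₁]
    [NormedAddCommGroup H₂] [InnerProductSpace ℂ H₂] [CompleteSpace H₂]
    (T12 : H₂ →ₗ.[ℂ] H₁) (hdense : Dense (T12.domain : Set H₂))
    (T22 : H₂ →L[ℂ] H₂) (hT22 : IsSelfAdjoint T22)
    (c₂ : ℝ) (hc2 : ∀ y : H₂, (inner ℂ y (T22 y) : ℂ).re ≤ c₂ * ‖y‖ ^ 2)
    (T11 : T12.adjoint.domain →ₗ[ℂ] H₁)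
    (μ lam : ℝ) (hlam : c₂ < lam)
    (x : T12.adjoint.domain) (y : T12.domain)
    (heq1 : T11 x + T12 y = (μ : ℂ) • (x : H₁))
    (heq2 : T12.adjoint x + T22 (y : H₂) = (μ : ℂ) • (y : H₂)) :
    (inner ℂ (x : H₁) (T11 x) : ℂ).re - lam * ‖(x : H₁)‖ ^ 2 -
      (inner ℂ (T12.adjoint x)
        (Ring.inverse (T22 - (lam : ℂ) • (1 : H₂ →L[ℂ] H₂)) (T12.adjoint x)) : ℂ).re =
    (μ - lam) * (‖(x : H₁)‖ ^ 2 + ‖(y : H₂)‖ ^ 2) -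
      (μ - lam) ^ 2 *
        (inner ℂ (y : H₂)
          (Ring.inverse (T22 - (lam : ℂ) • (1 : H₂ →L[ℂ] H₂)) (y : H₂)) : ℂ).re := by
  set S := T22 - (lam : ℂ) • (1 : H₂ →L[ℂ] H₂)
  have hS : IsSelfAdjoint S :=
    hT22.sub ((show IsSelfAdjoint (lam : ℂ) from Complex.conj_ofReal lam).smul (.one _))
  have ha : T12.adjoint x = ((μ - lam : ℝ) : ℂ) • (y : H₂) - S y := by
    rw [eq_sub_iff_add_eq.2 heq2]
    simp [S, sub_smul]
  have hx : inner ℂ (x : H₁) (T11 x) = (μ : ℂ) * ‖(x : H₁)‖ ^ 2 - inner ℂ (T12.adjoint x) y := by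
    rw [eq_sub_iff_add_eq.2 heq1, inner_sub_right, inner_smul_right, inner_self_eq_norm_sq_to_K,
      T12.adjoint_isFormalAdjoint hdense x y, RCLike.ofReal_eq_complex_ofReal]
  have hpair := inner_smul_sub_apply_add_ringInverse hS
    (isUnit_sub_smul_one_of_re_inner_le hT22 hc2 hlam) (μ - lam) y
  rw [← ha, inner_add_right] at hpair
  have hpair_re := congrArg Complex.re hpair
  have hxre := congrArg Complex.re hx
  simp only [Complex.add_re, Complex.sub_re, ← Complex.ofReal_pow, Complex.re_ofReal_mul,
    Complex.ofReal_re] at hpair_re hxre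
  linarith

/-- If `(x,y)` is an eigenvector of the block operator with eigenvalue `μ`,
i.e. `T₁₁x + T₁₂y = μx` and `T₁₂†x + T₂₂y = μy`, then for every `λ > c₂` one has
`re⟪x, T₁₁x⟫ − λ‖x‖² − re⟪T₁₂†x, (T₂₂−λ)⁻¹(T₁₂†x)⟫
  = (μ−λ)(‖x‖² + ‖y‖²) − (μ−λ)²·re⟪y, (T₂₂−λ)⁻¹y⟫`. -/
theorem stmt_18 {H₁ H₂ : Type*}
    [NormedAddCommGroup H₁] [InnerProductSpace ℂ H₁] [CompleteSpace H₁]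
    [NormedAddCommGroup H₂] [InnerProductSpace ℂ H₂] [CompleteSpace H₂]
    (T12 : H₂ →ₗ.[ℂ] H₁) (hdense : Dense (T12.domain : Set H₂)) (hclosed : T12.IsClosed)
    (T22 : H₂ →L[ℂ] H₂) (hT22 : IsSelfAdjoint T22)
    (c₂ : ℝ) (hc2 : ∀ y : H₂, (inner ℂ y (T22 y) : ℂ).re ≤ c₂ * ‖y‖ ^ 2)
    (T11 : T12.adjoint.domain →ₗ[ℂ] H₁)
    (hsymm : ∀ x x' : T12.adjoint.domain,
      (inner ℂ (x : H₁) (T11 x') : ℂ) = inner ℂ (T11 x) (x' : H₁))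
    (μ lam : ℝ) (hlam : c₂ < lam)
    (x : T12.adjoint.domain) (y : T12.domain)
    (heq1 : T11 x + T12 y = (μ : ℂ) • (x : H₁))
    (heq2 : T12.adjoint x + T22 (y : H₂) = (μ : ℂ) • (y : H₂)) :
    (inner ℂ (x : H₁) (T11 x) : ℂ).re - lam * ‖(x : H₁)‖ ^ 2 -
      (inner ℂ (T12.adjoint x)
        (Ring.inverse (T22 - (lam : ℂ) • (1 : H₂ →L[ℂ] H₂)) (T12.adjoint x)) : ℂ).re =
    (μ - lam) * (‖(x : H₁)‖ ^ 2 + ‖(y : H₂)‖ ^ 2) -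
      (μ - lam) ^ 2 *
        (inner ℂ (y : H₂)
          (Ring.inverse (T22 - (lam : ℂ) • (1 : H₂ →L[ℂ] H₂)) (y : H₂)) : ℂ).re :=
  stmt_18_general T12 hdense T22 hT22 c₂ hc2 T11 μ lam hlam x y heq1 heq2
end
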